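/- arXiv:1212.2229 — 5 statements merged into one kernel-verified Lean document; each statement's English description precedes it below -/
import Mathlib

section
/- Let W be a locally compact Hausdorff topological group acting continuously by isometries on a metric space X, such that the action is metrically proper (for every x ∈ X and every r ≥ 0 the set {w ∈ W : d(w·x, x) ≤ r} has compact closure in W) and such that the only element of W acting on X with bounded displacement is the identity (if sup_{x∈X} d(w·x, x) < ∞ then w = 1). Let G be a locally compact Hausdorff topological group and φ : G → W an abstract group homomorphism, and consider the induced action of G on X given by g·x := φ(g)·x. Assume this induced action is cobounded (there exist x₀ ∈ X and R ≥ 0 such that every point of X lies within distance R of the orbit {φ(g)·x₀ : g ∈ G}), metrically proper (for every x ∈ X and r ≥ 0 the set {g ∈ G : d(φ(g)·x, x) ≤ r} has compact closure in G), and locally bounded (for every compact subset Ω ⊆ G and every x ∈ X the set {φ(g)·x : g ∈ Ω} is bounded in X). Then φ is continuous. -/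
/-!
Let `x₀` have a cobounded `G`-orbit. Since the orbit map `g ↦ φ g • x₀` is bounded on a compact
neighbourhood of `1`, the filter `map φ (𝓝 1)` eventually lies in `S = {w | d(w x₀, x₀) ≤ C}`,
which is closed and, by properness of the `W`-action, compact. A cluster point `w` of this filter
stays a cluster point after conjugation by any `φ g`, hence `(φ g)⁻¹ w φ g ∈ S`: `w` moves every
point of the orbit of `x₀` by at most `C`, so by coboundedness it has bounded displacement and
`w = 1`. A filter in a compact set whose only cluster point is `1` converges to `1`, so `φ` is
continuous at `1`, hence everywhere.
-/

open Topology Filter Metric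

lemma Isometry.dist_apply_le_of_forall_near {X ι : Type*} [PseudoMetricSpace X] {f : X → X}
    (hf : Isometry f) {y : ι → X} {R C : ℝ} (hnear : ∀ x, ∃ i, dist x (y i) ≤ R)
    (hmove : ∀ i, dist (f (y i)) (y i) ≤ C) (x : X) :
    dist (f x) x ≤ C + 2 * R := by
  obtain ⟨i, hi⟩ := hnear x
  calc dist (f x) x ≤ dist (f x) (f (y i)) + dist (f (y i)) (y i) + dist (y i) x :=
        dist_triangle4 _ _ _ _
    _ = dist x (y i) + dist (f (y i)) (y i) + dist x (y i) := by
        rw [hf.dist_eq, dist_comm (y i)]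
    _ ≤ C + 2 * R := by linarith [hmove i]

lemma exists_eventually_dist_le_of_isBounded_image {G X : Type*} [TopologicalSpace G]
    [LocallyCompactSpace G] [PseudoMetricSpace X] {f : G → X}
    (hf : ∀ Ω : Set G, IsCompact Ω → Bornology.IsBounded (f '' Ω)) (a : G) :
    ∃ C, ∀ᶠ g in 𝓝 a, dist (f g) (f a) ≤ C := by
  obtain ⟨Ω, hΩ, hΩa⟩ := exists_compact_mem_nhds a
  obtain ⟨C, hC⟩ := (hf Ω hΩ).subset_closedBall (f a)
  exact ⟨C, eventually_of_mem hΩa fun g hg => hC (Set.mem_image_of_mem f hg)⟩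

lemma MapClusterPt.conj_map_nhds_one {G W : Type*} [Group G] [TopologicalSpace G]
    [ContinuousMul G] [Group W] [TopologicalSpace W] [ContinuousMul W] {φ : G →* W} {w : W}
    (hw : MapClusterPt w (𝓝 1) φ) (g : G) : MapClusterPt ((φ g)⁻¹ * w * φ g) (𝓝 1) φ := by
  have hconj : Tendsto (fun h : G => g⁻¹ * h * g) (𝓝 1) (𝓝 1) := by
    have hcont : Continuous fun h : G => g⁻¹ * h * g := by fun_prop
    simpa using hcont.tendsto 1
  refine MapClusterPt.of_comp hconj ?_
  have hcomm : (fun u : W => (φ g)⁻¹ * u * φ g) ∘ φ = φ ∘ fun h : G => g⁻¹ * h * g := by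
    ext h
    simp
  rw [← hcomm]
  exact hw.continuousAt_comp (f := fun u : W => (φ g)⁻¹ * u * φ g) (by fun_prop)

lemma dist_smul_le_of_mapClusterPt {W X G : Type*} [Group W] [TopologicalSpace W]
    [ContinuousMul W] [PseudoMetricSpace X] [MulAction W X] [Group G] [TopologicalSpace G]
    [ContinuousMul G] (hisom : ∀ w : W, Isometry fun x : X => w • x)
    (φ : G →* W) {x₀ : X} {C : ℝ} (hS : IsClosed {w : W | dist (w • x₀) x₀ ≤ C})
    (hC : ∀ᶠ g in 𝓝 1, dist (φ g • x₀) x₀ ≤ C) {w : W} (hw : MapClusterPt w (𝓝 1) φ) (g : G) :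
    dist (w • φ g • x₀) (φ g • x₀) ≤ C := by
  have hmem : dist (((φ g)⁻¹ * w * φ g) • x₀) x₀ ≤ C :=
    hS.mem_of_mapClusterPt (hw.conj_map_nhds_one g) hC
  rw [← (hisom (φ g)).dist_eq] at hmem
  simpa [mul_smul] using hmem

theorem continuity_of_homomorphism_bbcon_general
    {W : Type*} [Group W] [TopologicalSpace W] [IsTopologicalGroup W]
    {X : Type*} [MetricSpace X] [MulAction W X]
    (hcont : Continuous fun p : W × X => p.1 • p.2)
    (hisom : ∀ w : W, Isometry fun x : X => w • x)
    (hWproper : ∀ (x : X) (r : ℝ), 0 ≤ r →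
      IsCompact (closure {w : W | dist (w • x) x ≤ r}))
    (hnodisp : ∀ w : W, (∃ C : ℝ, ∀ x : X, dist (w • x) x ≤ C) → w = 1)
    {G : Type*} [Group G] [TopologicalSpace G] [IsTopologicalGroup G]
    [LocallyCompactSpace G]
    (φ : G →* W)
    (hcobounded : ∃ (x₀ : X) (R : ℝ), 0 ≤ R ∧ ∀ x : X, ∃ g : G, dist x (φ g • x₀) ≤ R)
    (hlocbounded : ∀ (Ω : Set G), IsCompact Ω → ∀ x : X,
      Bornology.IsBounded ((fun g : G => φ g • x) '' Ω)) :
    Continuous φ := by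
  obtain ⟨x₀, R, -, hnear⟩ := hcobounded
  obtain ⟨C, hC⟩ := exists_eventually_dist_le_of_isBounded_image (hlocbounded · · x₀) 1
  simp only [map_one, one_smul] at hC
  have hC₀ : 0 ≤ C := by simpa using hC.self_of_nhds
  set S := {w : W | dist (w • x₀) x₀ ≤ C}
  have hS : IsClosed S :=
    isClosed_le ((hcont.comp (continuous_id.prodMk continuous_const)).dist continuous_const)
      continuous_const
  have hScompact : IsCompact S := hS.closure_eq ▸ hWproper x₀ C hC₀
  refine continuous_of_continuousAt_one φ ?_
  rw [ContinuousAt, map_one]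
  refine hScompact.tendsto_nhds_of_unique_mapClusterPt hC fun w _ hw => hnodisp w ⟨C + 2 * R, ?_⟩
  exact (hisom w).dist_apply_le_of_forall_near hnear
    (dist_smul_le_of_mapClusterPt hisom φ hS hC hw)

/-- **Proposition `bbcon`.** Let `W` be a locally compact Hausdorff topological group acting
continuously by isometries on a metric space `X`, metrically properly, and such that the only
element of `W` acting with bounded displacement is the identity. Let `G` be a locally compact
Hausdorff topological group and `φ : G → W` an abstract group homomorphism; assume the induced
action of `G` on `X` is cobounded, metrically proper and locally bounded. Then `φ` is
continuous. -/
theorem continuity_of_homomorphism_bbcon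
    {W : Type*} [Group W] [TopologicalSpace W] [IsTopologicalGroup W]
    [LocallyCompactSpace W] [T2Space W]
    {X : Type*} [MetricSpace X] [MulAction W X]
    (hcont : Continuous fun p : W × X => p.1 • p.2)
    (hisom : ∀ w : W, Isometry fun x : X => w • x)
    (hWproper : ∀ (x : X) (r : ℝ), 0 ≤ r →
      IsCompact (closure {w : W | dist (w • x) x ≤ r}))
    (hnodisp : ∀ w : W, (∃ C : ℝ, ∀ x : X, dist (w • x) x ≤ C) → w = 1)
    {G : Type*} [Group G] [TopologicalSpace G] [IsTopologicalGroup G]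
    [LocallyCompactSpace G] [T2Space G]
    (φ : G →* W)
    (hcobounded : ∃ (x₀ : X) (R : ℝ), 0 ≤ R ∧ ∀ x : X, ∃ g : G, dist x (φ g • x₀) ≤ R)
    (hGproper : ∀ (x : X) (r : ℝ), 0 ≤ r →
      IsCompact (closure {g : G | dist (φ g • x) x ≤ r}))
    (hlocbounded : ∀ (Ω : Set G), IsCompact Ω → ∀ x : X,
      Bornology.IsBounded ((fun g : G => φ g • x) '' Ω)) :
    Continuous φ :=
  continuity_of_homomorphism_bbcon_general hcont hisom hWproper hnodisp φ hcobounded hlocbounded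
end

section
/- Let G be a group and let ρ be a (μ,α)-ULSL quasi-action of G on a metric space X. Then there exist a metric space Y, an action of G on Y by (surjective) isometries, and a quasi-isometry j : Y → X that is quasi-equivariant: sup_{g∈G, y∈Y} d(j(g·y), ρ(g)(j(y))) < ∞. -/
/-- A map `f` between metric spaces is `(μ,α)`-Lipschitz (large-scale Lipschitz). -/
def IsLSLipschitzWith {X Y : Type*} [MetricSpace X] [MetricSpace Y]
    (μ α : ℝ) (f : X → Y) : Prop :=
  ∀ x₁ x₂ : X, dist (f x₁) (f x₂) ≤ μ * dist x₁ x₂ + α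

/-- A map `f` between metric spaces is a `(μ,α)`-quasi-isometry. -/
def IsQuasiIsometryWith {X Y : Type*} [MetricSpace X] [MetricSpace Y]
    (μ α : ℝ) (f : X → Y) : Prop :=
  (∀ x₁ x₂ : X, (1 / μ) * dist x₁ x₂ - α ≤ dist (f x₁) (f x₂)) ∧
    IsLSLipschitzWith μ α f ∧ ∀ y : Y, ∃ x : X, dist y (f x) ≤ α

/-- A `(μ,α)`-ULSL (uniformly large-scale Lipschitz) quasi-action of a group `G` on a
metric space `X`. -/
def IsULSLQuasiAction {G : Type*} [Group G] {X : Type*} [MetricSpace X]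
    (μ α : ℝ) (ρ : G → X → X) : Prop :=
  (∀ g : G, IsLSLipschitzWith μ α (ρ g)) ∧
    (∀ x : X, dist (ρ 1 x) x ≤ α) ∧
    ∀ g h : G, ∀ x : X, dist (ρ (g * h) x) (ρ g (ρ h x)) ≤ α

/-!
The quasi-action becomes an honest isometric action on `G × X`, where `G` acts by left
multiplication on the first factor, once `G × X` carries the `G`-invariant distance
`d(p, q) = sup_k d(ρ(k p₁) p₂, ρ(k q₁) q₂) + [p ≠ q]`. The supremum is finite because the
quasi-action axioms give `d(ρ(k g) x, ρ(k h) y) ≤ μ d(ρ g x, ρ h y) + 3α`; the same estimate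
(with `k = 1` for the reverse inequality) shows that `j (g, x) = ρ g x` is a quasi-isometry,
and `d(j(g p), ρ g (j p)) ≤ α` is the composition axiom.
-/

theorem isQuasiIsometryWith_of_dist_le {X Y : Type*} [MetricSpace X] [MetricSpace Y]
    {μ α : ℝ} {f : X → Y} (hμ : 1 ≤ μ) (hα : 0 ≤ α)
    (h_le : ∀ a b, dist (f a) (f b) ≤ dist a b)
    (le_h : ∀ a b, dist a b ≤ μ * dist (f a) (f b) + α)
    (h_cobdd : ∀ y, ∃ x, dist y (f x) ≤ α) :
    IsQuasiIsometryWith μ α f := by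
  refine ⟨fun a b => ?_, fun a b => ?_, h_cobdd⟩
  · have hμ₀ : 0 < μ := zero_lt_one.trans_le hμ
    rw [one_div, ← div_eq_inv_mul, sub_le_iff_le_add, div_le_iff₀ hμ₀]
    nlinarith [le_h a b]
  · nlinarith [h_le a b, dist_nonneg (x := a) (y := b)]

section ConjugatingDist

variable {G : Type*} [Group G] {X : Type*} [MetricSpace X] {μ α : ℝ} {ρ : G → X → X}

noncomputable def orbitSupDist (ρ : G → X → X) (p q : G × X) : ℝ :=
  ⨆ k : G, dist (ρ (k * p.1) p.2) (ρ (k * q.1) q.2)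

open Classical in
/-- The discrete summand turns the pseudometric `orbitSupDist ρ` into a metric. -/
noncomputable def conjugatingDist (ρ : G → X → X) (p q : G × X) : ℝ :=
  orbitSupDist ρ p q + if p = q then 0 else 1

theorem orbitSupDist_self (p : G × X) : orbitSupDist ρ p p = 0 := by
  simp [orbitSupDist]

theorem orbitSupDist_comm (p q : G × X) : orbitSupDist ρ p q = orbitSupDist ρ q p := by
  simp only [orbitSupDist, dist_comm]

theorem orbitSupDist_mul_left (g : G) (p q : G × X) :
    orbitSupDist ρ (g * p.1, p.2) (g * q.1, q.2) = orbitSupDist ρ p q := by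
  simp only [orbitSupDist, ← mul_assoc]
  exact (Equiv.mulRight g).iSup_comp (g := fun k => dist (ρ (k * p.1) p.2) (ρ (k * q.1) q.2))

theorem conjugatingDist_mul_left (g : G) (p q : G × X) :
    conjugatingDist ρ (g * p.1, p.2) (g * q.1, q.2) = conjugatingDist ρ p q := by
  have h_eq : (g * p.1, p.2) = (g * q.1, q.2) ↔ p = q := by simp [Prod.ext_iff]
  classical
  rw [conjugatingDist, conjugatingDist, orbitSupDist_mul_left]
  exact congrArg _ (if_congr h_eq rfl rfl)

namespace IsULSLQuasiAction

variable (hρ : IsULSLQuasiAction μ α ρ)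
include hρ

theorem dist_mul_le (k : G) (p q : G × X) :
    dist (ρ (k * p.1) p.2) (ρ (k * q.1) q.2) ≤ μ * dist (ρ p.1 p.2) (ρ q.1 q.2) + 3 * α := by
  obtain ⟨hlip, -, hcomp⟩ := hρ
  calc dist (ρ (k * p.1) p.2) (ρ (k * q.1) q.2)
      ≤ dist (ρ (k * p.1) p.2) (ρ k (ρ p.1 p.2)) + dist (ρ k (ρ p.1 p.2)) (ρ k (ρ q.1 q.2))
          + dist (ρ k (ρ q.1 q.2)) (ρ (k * q.1) q.2) := dist_triangle4 _ _ _ _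
    _ ≤ α + (μ * dist (ρ p.1 p.2) (ρ q.1 q.2) + α) + α := by
        gcongr
        · exact hcomp k p.1 p.2
        · exact hlip k _ _
        · rw [dist_comm]; exact hcomp k q.1 q.2
    _ = μ * dist (ρ p.1 p.2) (ρ q.1 q.2) + 3 * α := by ring

theorem bddAbove_range_dist_mul (p q : G × X) :
    BddAbove (Set.range fun k : G => dist (ρ (k * p.1) p.2) (ρ (k * q.1) q.2)) :=
  ⟨_, Set.forall_mem_range.2 fun k => hρ.dist_mul_le k p q⟩

theorem dist_le_orbitSupDist (p q : G × X) :
    dist (ρ p.1 p.2) (ρ q.1 q.2) ≤ orbitSupDist ρ p q := by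
  simpa [orbitSupDist] using le_ciSup (hρ.bddAbove_range_dist_mul p q) 1

theorem orbitSupDist_le (p q : G × X) :
    orbitSupDist ρ p q ≤ μ * dist (ρ p.1 p.2) (ρ q.1 q.2) + 3 * α :=
  ciSup_le fun k => hρ.dist_mul_le k p q

theorem orbitSupDist_triangle (p q r : G × X) :
    orbitSupDist ρ p r ≤ orbitSupDist ρ p q + orbitSupDist ρ q r :=
  ciSup_le fun k => (dist_triangle _ (ρ (k * q.1) q.2) _).trans <|
    add_le_add (le_ciSup (hρ.bddAbove_range_dist_mul p q) k)
      (le_ciSup (hρ.bddAbove_range_dist_mul q r) k)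

theorem dist_le_conjugatingDist (p q : G × X) :
    dist (ρ p.1 p.2) (ρ q.1 q.2) ≤ conjugatingDist ρ p q := by
  have h_sup := hρ.dist_le_orbitSupDist p q
  unfold conjugatingDist
  split_ifs <;> linarith

theorem conjugatingDist_le (p q : G × X) :
    conjugatingDist ρ p q ≤ μ * dist (ρ p.1 p.2) (ρ q.1 q.2) + (3 * α + 1) := by
  have h_sup := hρ.orbitSupDist_le p q
  unfold conjugatingDist
  split_ifs <;> linarith

noncomputable abbrev metricSpace : MetricSpace (G × X) where
  dist := conjugatingDist ρ
  dist_self p := by simp [conjugatingDist, orbitSupDist_self]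
  dist_comm p q := by
    classical
    rw [conjugatingDist, conjugatingDist, orbitSupDist_comm p q]
    exact congrArg _ (if_congr eq_comm rfl rfl)
  dist_triangle p q r := by
    have h_sup := hρ.orbitSupDist_triangle p q r
    simp only [conjugatingDist]
    split_ifs <;> simp_all <;> linarith
  eq_of_dist_eq_zero {p q} h := by
    have h_sup := dist_nonneg.trans (hρ.dist_le_orbitSupDist p q)
    change conjugatingDist ρ p q = 0 at h
    unfold conjugatingDist at h
    split_ifs at h with hpq
    · exact hpq
    · linarith

noncomputable def isometryAction : letI := hρ.metricSpace; G →* (G × X) ≃ᵢ (G × X) :=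
  letI := hρ.metricSpace
  MonoidHom.mk'
    (fun g =>
      { toEquiv := (Equiv.mulLeft g).prodCongr (Equiv.refl X)
        isometry_toFun := Isometry.of_dist_eq fun p q => conjugatingDist_mul_left g p q })
    fun g h => IsometryEquiv.ext fun p => Prod.ext (mul_assoc g h p.1) rfl

end IsULSLQuasiAction

end ConjugatingDist

universe u v

/-- **Lemma `qadico`(b).** Any ULSL quasi-action of a group `G` on a metric space `X` is
quasi-isometrically quasi-conjugate to a genuine isometric action: there are a metric space
`Y`, an action of `G` on `Y` by surjective isometries, and a quasi-equivariant quasi-isometry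
`j : Y → X`. -/
theorem isometric_action_of_ulsl_quasiAction
    {G : Type u} [Group G] {X : Type v} [MetricSpace X]
    (μ α : ℝ) (hμ : 1 ≤ μ) (hα : 0 ≤ α)
    (ρ : G → X → X) (hρ : IsULSLQuasiAction μ α ρ) :
    ∃ (Y : Type (max u v)) (_ : MetricSpace Y) (act : G →* (Y ≃ᵢ Y)) (j : Y → X),
      (∃ μ' α' : ℝ, 1 ≤ μ' ∧ 0 ≤ α' ∧ IsQuasiIsometryWith μ' α' j) ∧
      ∃ C : ℝ, ∀ (g : G) (y : Y), dist (j (act g y)) (ρ g (j y)) ≤ C := by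
  let _ := hρ.metricSpace
  have hα' : 0 ≤ 3 * α + 1 := by linarith
  have h_cobdd (x : X) : ∃ p : G × X, dist x (ρ p.1 p.2) ≤ 3 * α + 1 :=
    ⟨(1, x), by rw [dist_comm]; linarith [hρ.2.1 x]⟩
  refine ⟨G × X, hρ.metricSpace, hρ.isometryAction, fun p => ρ p.1 p.2,
    ⟨μ, 3 * α + 1, hμ, hα', ?_⟩, α, fun g p => hρ.2.2 g p.1 p.2⟩
  exact isQuasiIsometryWith_of_dist_le hμ hα' hρ.dist_le_conjugatingDist
    hρ.conjugatingDist_le h_cobdd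
end

section
/- Let T be a tree whose vertex set is unbounded in the graph metric, and suppose the automorphism group Aut(T) has only finitely many orbits on the vertex set. Let S be the set of all vertices of T that lie on some bi-infinite geodesic. Then: (i) S is nonempty; (ii) the induced subgraph on S is connected, so S is a subtree; (iii) S is cobounded in T; (iv) S is contained in every cobounded subtree of T (so S is the unique minimal cobounded subtree of T); and (v) S is the whole vertex set of T if and only if T has no vertex of degree 1. -/
variable {V : Type*}

/-- A bi-infinite geodesic in a graph: a map `γ : ℤ → V` such that the graph distance
between `γ m` and `γ n` is `|m - n|`. -/
def IsBiInfGeodesic (T : SimpleGraph V) (γ : ℤ → V) : Prop :=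
  ∀ m n : ℤ, T.dist (γ m) (γ n) = (m - n).natAbs

/-- A set of vertices is cobounded if every vertex lies within a uniformly bounded graph
distance of it. -/
def IsCoboundedVertexSet (T : SimpleGraph V) (S : Set V) : Prop :=
  ∃ r : ℕ, ∀ v : V, ∃ s ∈ S, T.dist v s ≤ r

/-- A subtree: a (nonempty) set of vertices whose induced subgraph is connected. -/
def IsSubtree (T : SimpleGraph V) (S : Set V) : Prop :=
  (T.induce S).Connected

/-!
In a tree a bi-infinite walk without backtracking is a geodesic, so a vertex lies on a bi-infinite
geodesic exactly when reduced rays leave it through two different neighbours. From a vertex `b`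
with this property one reaches any `u` by a ray avoiding any vertex `z` with `d(b, u) ≤ d(b, z)`;
since for `v` between `a` and `b` every `z` is at least as far from `a` or from `b` as `v` is,
the set is convex, hence a subtree. A path joining points near the two far ends of a geodesic
through `v` must pass through `v`, so every connected cobounded set contains the set, and without
leaves rays can be continued forever from every vertex.

For nonemptiness, three vertices of a long geodesic segment lie in one orbit; some automorphism
between two of them translates the segment along itself, and the translates of the segment form
a bi-infinite geodesic. Invariance under automorphisms then makes the set cobounded.
-/

namespace SimpleGraph

variable {G : SimpleGraph V} {u v w : V}

lemma dist_le_length_of_mem_support (p : G.Walk u v) (hw : w ∈ p.support) :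
    G.dist u w ≤ p.length := by
  classical
  exact (dist_le _).trans (p.length_takeUntil_le_length hw)

lemma Connected.exists_adj_dist_add_one_eq (hG : G.Connected) (huv : u ≠ v) :
    ∃ w, G.Adj u w ∧ G.dist w v + 1 = G.dist u v := by
  obtain ⟨p, -, hp⟩ := hG.exists_path_of_dist u v
  have hnil : ¬ p.Nil := fun h => huv h.eq
  refine ⟨p.snd, p.adj_snd hnil, le_antisymm ?_ ?_⟩
  · have := dist_le p.tail
    have := p.length_tail_add_one hnil
    omega
  · have := hG.dist_triangle (u := u) (v := p.snd) (w := v)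
    rw [dist_eq_one_iff_adj.mpr (p.adj_snd hnil)] at this
    omega

lemma Iso.dist_eq {W : Type*} {G' : SimpleGraph W} (φ : G ≃g G') (u v : V) :
    G'.dist (φ u) (φ v) = G.dist u v := by
  by_cases h : G.Reachable u v
  · obtain ⟨p, hp⟩ := h.exists_walk_length_eq_dist
    obtain ⟨q, hq⟩ := (Iso.reachable_iff (φ := φ) |>.mpr h).exists_walk_length_eq_dist
    refine le_antisymm ?_ ?_
    · simpa [hp] using dist_le (p.map φ.toHom)
    · simpa [hq] using dist_le (q.map φ.symm.toHom)
  · rw [dist_eq_zero_of_not_reachable h,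
      dist_eq_zero_of_not_reachable (fun h' => h (Iso.reachable_iff.mp h'))]

lemma IsTree.eq_of_adj_of_dist_add_one_eq (hG : G.IsTree) {a x y y' : V}
    (hy : G.Adj x y) (hy' : G.Adj x y')
    (hdy : G.dist a y + 1 = G.dist a x) (hdy' : G.dist a y' + 1 = G.dist a x) : y = y' := by
  obtain ⟨p, hp, -⟩ := hG.connected.exists_path_of_dist a x
  have penultimate_eq : ∀ z, G.Adj x z → G.dist a z + 1 = G.dist a x → z = p.penultimate := by
    intro z hz hdz
    obtain ⟨q, hq, hqlen⟩ := hG.connected.exists_path_of_dist a z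
    have hx : x ∉ q.support := fun hx => by
      have := dist_le_length_of_mem_support q hx
      omega
    exact hG.isAcyclic.eq_penultimate_of_adj_end hp hz
      (hG.isAcyclic.mem_support_of_ne_mem_support_of_adj_of_isPath hp hq hz hx)
  rw [penultimate_eq y hy hdy, penultimate_eq y' hy' hdy']

def IsReducedLine (G : SimpleGraph V) (γ : ℤ → V) : Prop :=
  ∀ n, G.Adj (γ n) (γ (n + 1)) ∧ γ (n + 1) ≠ γ (n - 1)

def IsReducedRay (G : SimpleGraph V) (r : ℕ → V) : Prop :=
  ∀ n, G.Adj (r n) (r (n + 1)) ∧ r (n + 2) ≠ r n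

def IsReducedSegment (G : SimpleGraph V) (c : ℕ → V) (L : ℕ) : Prop :=
  (∀ k < L, G.Adj (c k) (c (k + 1))) ∧ ∀ k, k + 2 ≤ L → c (k + 2) ≠ c k

lemma _root_.IsBiInfGeodesic.isReducedLine {γ : ℤ → V} (hγ : IsBiInfGeodesic G γ) :
    G.IsReducedLine γ := by
  refine fun n => ⟨dist_eq_one_iff_adj.mp (by rw [hγ]; simp), fun h => ?_⟩
  have := hγ (n + 1) (n - 1)
  rw [h, dist_self] at this
  omega

lemma IsTree.dist_eq_of_isReducedLine (hG : G.IsTree) {γ : ℤ → V} (hγ : G.IsReducedLine γ)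
    (m : ℤ) (k : ℕ) : G.dist (γ m) (γ (m + k)) = k := by
  suffices h : ∀ k : ℕ, G.dist (γ m) (γ (m + k)) = k ∧ G.dist (γ m) (γ (m + k + 1)) = k + 1 from
    (h k).1
  intro k
  induction k with
  | zero => simpa using dist_eq_one_iff_adj.mpr (hγ m).1
  | succ k ih =>
    refine ⟨by simpa [← add_assoc] using ih.2, ?_⟩
    obtain ⟨hback, hnext⟩ := ih
    set n := m + k
    have hadj : G.Adj (γ (n + 1)) (γ (n + 1 + 1)) := (hγ (n + 1)).1
    have hne : γ (n + 1 + 1) ≠ γ n := by simpa using (hγ (n + 1)).2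
    have hstep := hG.dist_eq_dist_add_one_of_adj (γ m) hadj
    -- the neighbour of `γ (n + 1)` closer to `γ m` is `γ n`, and the walk does not backtrack
    have : G.dist (γ m) (γ (n + 1 + 1)) ≠ k := fun h =>
      hne (hG.eq_of_adj_of_dist_add_one_eq (a := γ m) hadj (hγ n).1.symm (by omega) (by omega))
    rw [show m + ((k + 1 : ℕ) : ℤ) + 1 = n + 1 + 1 by push_cast; ring]
    omega

lemma IsTree.isBiInfGeodesic_of_isReducedLine (hG : G.IsTree) {γ : ℤ → V}
    (hγ : G.IsReducedLine γ) : IsBiInfGeodesic G γ := by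
  intro m n
  rcases le_total m n with h | h
  · rw [show n = m + (n - m).toNat by omega, hG.dist_eq_of_isReducedLine hγ]
    omega
  · rw [dist_comm, show m = n + (m - n).toNat by omega, hG.dist_eq_of_isReducedLine hγ]
    omega

lemma IsReducedRay.isReducedLine_glue {r r' : ℕ → V} (hr : G.IsReducedRay r)
    (hr' : G.IsReducedRay r') (h0 : r 0 = r' 0) (h1 : r 1 ≠ r' 1) :
    G.IsReducedLine fun n => if 0 ≤ n then r n.toNat else r' (-n).toNat := by
  set γ : ℤ → V := fun n => if 0 ≤ n then r n.toNat else r' (-n).toNat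
  have hpos : ∀ j : ℕ, γ j = r j := fun j => by simp [γ]
  have hneg : ∀ j : ℕ, γ (-j) = r' j := fun j => by
    rcases j with _ | j
    · simp [γ, h0]
    · simp only [γ]
      rw [if_neg (by omega)]
      congr
  intro n
  rcases lt_trichotomy n 0 with hn | rfl | hn
  · obtain ⟨j, rfl⟩ : ∃ j : ℕ, n = -(j + 1 : ℕ) := ⟨(-n - 1).toNat, by omega⟩
    rw [show -((j + 1 : ℕ) : ℤ) + 1 = -(j : ℕ) by push_cast; ring,
      show -((j + 1 : ℕ) : ℤ) - 1 = -(j + 2 : ℕ) by push_cast; ring, hneg, hneg, hneg]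
    exact ⟨(hr' j).1.symm, (hr' j).2.symm⟩
  · simpa [hpos 0, hpos 1, ← hneg 1] using ⟨(hr 0).1, h1⟩
  · obtain ⟨j, rfl⟩ : ∃ j : ℕ, n = (j + 1 : ℕ) := ⟨(n - 1).toNat, by omega⟩
    rw [show ((j + 1 : ℕ) : ℤ) + 1 = (j + 2 : ℕ) by push_cast; ring,
      show ((j + 1 : ℕ) : ℤ) - 1 = (j : ℕ) by push_cast; ring, hpos, hpos, hpos]
    exact ⟨(hr (j + 1)).1, (hr j).2⟩

lemma IsReducedRay.exists_cons {r : ℕ → V} (hr : G.IsReducedRay r) {x : V}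
    (hx : G.Adj x (r 0)) (hx1 : x ≠ r 1) :
    ∃ r' : ℕ → V, G.IsReducedRay r' ∧ r' 0 = x ∧ r' 1 = r 0 := by
  refine ⟨fun | 0 => x | n + 1 => r n, ?_, rfl, rfl⟩
  rintro (_ | n)
  exacts [⟨hx, hx1.symm⟩, hr n]

/-- Reduced rays leave `v` through at least two different neighbours. -/
def HasTwoRayDirections (G : SimpleGraph V) (v : V) : Prop :=
  ∀ z, ∃ r : ℕ → V, G.IsReducedRay r ∧ r 0 = v ∧ r 1 ≠ z

lemma IsReducedLine.hasTwoRayDirections {γ : ℤ → V} (hγ : G.IsReducedLine γ) (k : ℤ) :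
    G.HasTwoRayDirections (γ k) := by
  have forward : G.IsReducedRay fun n => γ (k + n) := fun n => by
    refine ⟨by simpa [add_assoc] using (hγ (k + n)).1, ?_⟩
    have h := (hγ (k + n + 1)).2
    rwa [show k + n + 1 + 1 = k + (n + 2 : ℕ) by push_cast; ring, add_sub_cancel_right] at h
  have backward : G.IsReducedRay fun n => γ (k - n) := fun n => by
    have h := hγ (k - n - 1)
    rw [sub_add_cancel, show k - n - 1 = k - (n + 1 : ℕ) by push_cast; ring,
      show k - (n + 1 : ℕ) - 1 = k - (n + 2 : ℕ) by push_cast; ring] at h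
    exact ⟨h.1.symm, h.2.symm⟩
  intro z
  by_cases hz : γ (k + 1) = z
  · refine ⟨_, backward, by simp, fun h => (hγ k).2 ?_⟩
    simp_all
  · exact ⟨_, forward, by simp, by simpa using hz⟩

lemma HasTwoRayDirections.exists_isReducedLine (hv : G.HasTwoRayDirections v) :
    ∃ γ : ℤ → V, G.IsReducedLine γ ∧ γ 0 = v := by
  obtain ⟨r, hr, hr0, -⟩ := hv v
  obtain ⟨r', hr', hr'0, hr'1⟩ := hv (r 1)
  exact ⟨_, hr.isReducedLine_glue hr' (hr0.trans hr'0.symm) (Ne.symm hr'1), by simp [hr0]⟩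

def biInfGeodesicSupport (G : SimpleGraph V) : Set V :=
  {v | ∃ γ : ℤ → V, IsBiInfGeodesic G γ ∧ ∃ n : ℤ, γ n = v}

lemma IsTree.mem_biInfGeodesicSupport_iff (hG : G.IsTree) :
    v ∈ G.biInfGeodesicSupport ↔ G.HasTwoRayDirections v := by
  constructor
  · rintro ⟨γ, hγ, n, rfl⟩
    exact hγ.isReducedLine.hasTwoRayDirections n
  · intro hv
    obtain ⟨γ, hγ, hγ0⟩ := hv.exists_isReducedLine
    exact ⟨γ, hG.isBiInfGeodesic_of_isReducedLine hγ, 0, hγ0⟩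

lemma Connected.exists_isReducedRay_of_dist_le (hG : G.Connected) {b : V}
    (hb : G.HasTwoRayDirections b) {u z : V} (h : G.dist b u ≤ G.dist b z) :
    ∃ r : ℕ → V, G.IsReducedRay r ∧ r 0 = u ∧ r 1 ≠ z := by
  suffices key : ∀ d, ∀ u z : V, G.dist u b = d → G.dist b u ≤ G.dist b z →
      ∃ r : ℕ → V, G.IsReducedRay r ∧ r 0 = u ∧ r 1 ≠ z from key _ u z rfl h
  intro d
  induction d with
  | zero =>
    intro u z hu _
    rw [hG.dist_eq_zero_iff] at hu
    exact hu ▸ hb z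
  | succ d ih =>
    intro u z hu hz
    obtain ⟨u', hadj, hu'⟩ := hG.exists_adj_dist_add_one_eq (u := u) (v := b)
      (by rintro rfl; simp at hu)
    obtain ⟨r, hr, hr0, hr1⟩ := ih u' u (by omega) (by rw [dist_comm, dist_comm (u := b)]; omega)
    obtain ⟨r', hr', hr'0, hr'1⟩ := hr.exists_cons (hr0 ▸ hadj) (Ne.symm hr1)
    refine ⟨r', hr', hr'0, hr'1 ▸ hr0 ▸ ?_⟩
    rintro rfl
    rw [dist_comm, dist_comm (u := b)] at hz
    omega

lemma Connected.hasTwoRayDirections_of_dist_add_dist_eq (hG : G.Connected) {a b : V}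
    (ha : G.HasTwoRayDirections a) (hb : G.HasTwoRayDirections b)
    (hv : G.dist a v + G.dist v b = G.dist a b) : G.HasTwoRayDirections v := by
  intro z
  have := hG.dist_triangle (u := a) (v := z) (w := b)
  by_cases h : G.dist a v ≤ G.dist a z
  · exact hG.exists_isReducedRay_of_dist_le ha h
  · refine hG.exists_isReducedRay_of_dist_le hb ?_
    rw [dist_comm, dist_comm (u := b)]
    omega

lemma Connected.induce_connected_of_forall_dist_add_dist_eq (hG : G.Connected) {S : Set V}
    (hne : S.Nonempty)
    (hS : ∀ a ∈ S, ∀ b ∈ S, ∀ v, G.dist a v + G.dist v b = G.dist a b → v ∈ S) :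
    (G.induce S).Connected := by
  rw [connected_iff]
  refine ⟨?_, hne.to_subtype⟩
  suffices key : ∀ d, ∀ a b : S, G.dist a b = d → (G.induce S).Reachable a b from
    fun a b => key _ a b rfl
  intro d
  induction d with
  | zero =>
    intro a b h
    rw [hG.dist_eq_zero_iff, ← Subtype.ext_iff] at h
    rw [h]
  | succ d ih =>
    rintro ⟨a, ha⟩ ⟨b, hb⟩ (h : G.dist a b = d + 1)
    obtain ⟨a', hadj, ha'⟩ := hG.exists_adj_dist_add_one_eq (u := a) (v := b)
      (by rintro rfl; simp at h)
    have ha'S : a' ∈ S := hS a ha b hb a' (by rw [dist_eq_one_iff_adj.mpr hadj]; omega)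
    exact (show (G.induce S).Adj ⟨a, ha⟩ ⟨a', ha'S⟩ from hadj).reachable.trans
      (ih ⟨a', ha'S⟩ ⟨b, hb⟩ (show G.dist a' b = d by omega))

lemma IsTree.induce_biInfGeodesicSupport_connected (hG : G.IsTree)
    (hne : G.biInfGeodesicSupport.Nonempty) : (G.induce G.biInfGeodesicSupport).Connected := by
  refine hG.connected.induce_connected_of_forall_dist_add_dist_eq hne fun a ha b hb v hv => ?_
  rw [hG.mem_biInfGeodesicSupport_iff] at ha hb ⊢
  exact hG.connected.hasTwoRayDirections_of_dist_add_dist_eq ha hb hv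

lemma IsTree.mem_support_of_dist_lt (hG : G.IsTree) {x y x' y' : V}
    (hv : G.dist x v + G.dist v y = G.dist x y) (hx : G.dist x x' < G.dist x v)
    (hy : G.dist y y' < G.dist y v) (w : G.Walk x' y') : v ∈ w.support := by
  classical
  obtain ⟨p, hp⟩ := hG.connected.exists_walk_length_eq_dist x v
  obtain ⟨q, hq⟩ := hG.connected.exists_walk_length_eq_dist v y
  obtain ⟨p₁, hp₁⟩ := hG.connected.exists_walk_length_eq_dist x x'
  obtain ⟨p₂, hp₂⟩ := hG.connected.exists_walk_length_eq_dist y y'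
  have hpath : (p.append q).IsPath := Walk.isPath_of_length_eq_dist _ (by simp [hp, hq, hv])
  let W := p₁.append (w.append p₂.reverse)
  have hbypass : W.bypass = p.append q :=
    (hG.existsUnique_path x y).unique W.bypass_isPath hpath
  have hvW : v ∈ W.support := W.support_bypass_subset_support <| hbypass ▸
    (Walk.mem_support_append_iff _ _).mpr (Or.inl p.end_mem_support)
  simp only [W, Walk.mem_support_append_iff, Walk.support_reverse, List.mem_reverse] at hvW
  rcases hvW with h | h | h
  · have := dist_le_length_of_mem_support p₁ h
    omega
  · exact h
  · have := dist_le_length_of_mem_support p₂ h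
    omega

lemma IsTree.biInfGeodesicSupport_subset (hG : G.IsTree) {S : Set V}
    (hS : (G.induce S).Connected) (hcob : IsCoboundedVertexSet G S) :
    G.biInfGeodesicSupport ⊆ S := by
  rintro _ ⟨γ, hγ, k, rfl⟩
  obtain ⟨R, hR⟩ := hcob
  obtain ⟨s₁, hs₁, hd₁⟩ := hR (γ (k - (R + 1)))
  obtain ⟨s₂, hs₂, hd₂⟩ := hR (γ (k + (R + 1)))
  obtain ⟨q⟩ := hS.preconnected ⟨s₁, hs₁⟩ ⟨s₂, hs₂⟩
  have hsupp : ∀ x ∈ (q.map (Embedding.induce S).toHom).support, x ∈ S := by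
    simp only [Walk.support_map, List.mem_map]
    rintro _ ⟨⟨u, hu⟩, -, rfl⟩
    exact hu
  exact hsupp _ <| hG.mem_support_of_dist_lt (x := γ (k - (R + 1))) (y := γ (k + (R + 1)))
    (x' := s₁) (y' := s₂) (by rw [hγ, hγ, hγ]; omega) (by rw [hγ]; omega) (by rw [hγ]; omega) _

lemma Iso.apply_mem_biInfGeodesicSupport (φ : G ≃g G) (hv : v ∈ G.biInfGeodesicSupport) :
    φ v ∈ G.biInfGeodesicSupport := by
  obtain ⟨γ, hγ, n, rfl⟩ := hv
  exact ⟨φ ∘ γ, fun m k => by simp [φ.dist_eq, hγ m k], n, rfl⟩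

lemma isCoboundedVertexSet_of_finite_orbits {S : Set V}
    (hS : ∀ φ : G ≃g G, ∀ v ∈ S, φ v ∈ S) {s : V} (hs : s ∈ S) {F : Set V} (hF : F.Finite)
    (horb : ∀ v, ∃ φ : G ≃g G, φ v ∈ F) : IsCoboundedVertexSet G S := by
  refine ⟨hF.toFinset.sup fun f => G.dist f s, fun v => ?_⟩
  obtain ⟨φ, hφ⟩ := horb v
  refine ⟨φ.symm s, hS _ s hs, ?_⟩
  rw [← φ.dist_eq, φ.apply_symm_apply]
  exact Finset.le_sup (f := fun f => G.dist f s) (hF.mem_toFinset.mpr hφ)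

lemma isReducedLine_of_apply_add_eq (α : G ≃g G) {γ : ℤ → V} {N : ℤ} (hN : 0 < N)
    (hγ : ∀ n, γ (n + N) = α (γ n))
    (hperiod : ∀ n, 0 < n → n ≤ N → G.Adj (γ n) (γ (n + 1)) ∧ γ (n + 1) ≠ γ (n - 1)) :
    G.IsReducedLine γ := by
  set Q : ℤ → Prop := fun m => G.Adj (γ (m + 1)) (γ (m + 1 + 1)) ∧ γ (m + 1 + 1) ≠ γ (m + 1 - 1)
  have hQ : Function.Periodic Q N := fun m => by
    simp only [Q]
    rw [show m + N + 1 = m + 1 + N by ring, show m + 1 + N + 1 = m + 1 + 1 + N by ring,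
      show m + 1 + N - 1 = m + 1 - 1 + N by ring, hγ, hγ, hγ, α.map_adj_iff, α.injective.ne_iff]
  intro n
  have hmod := hperiod ((n - 1) % N + 1) (by linarith [Int.emod_nonneg (n - 1) hN.ne'])
    (by linarith [Int.emod_lt_of_pos (n - 1) hN])
  have := hQ.sub_int_mul_eq (x := n - 1) ((n - 1) / N)
  rw [Int.emod_def, mul_comm] at hmod
  simpa [Q] using Eq.mp this hmod

lemma IsReducedSegment.exists_isReducedLine_of_iso {c : ℕ → V} {L : ℕ}
    (hc : G.IsReducedSegment c (L + 1)) (α : G ≃g G) (hα : α (c 0) = c (L + 1))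
    (hα1 : α (c 1) ≠ c L) : ∃ γ : ℤ → V, G.IsReducedLine γ ∧ γ 0 = c 0 := by
  set N : ℤ := L + 1 with hN
  have hN0 : N ≠ 0 := by omega
  set γ : ℤ → V := fun n => (α ^ (n / N)) (c (n % N).toNat)
  have hγ : ∀ n, γ (n + N) = α (γ n) := fun n => by
    simp only [γ, Int.add_emod_right]
    rw [show (n + N) / N = 1 + n / N by simpa [add_comm] using Int.add_mul_ediv_right n 1 hN0,
      zpow_add, zpow_one, RelIso.mul_apply]
  have hseg : ∀ k : ℕ, k ≤ L + 1 → γ k = c k := fun k hk => by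
    rcases hk.lt_or_eq with hk | rfl
    · simp [γ, Int.ediv_eq_zero_of_lt (by omega : (0 : ℤ) ≤ k) (by omega : (k : ℤ) < N),
        Int.emod_eq_of_lt (by omega : (0 : ℤ) ≤ k) (by omega : (k : ℤ) < N)]
    · rw [show ((L + 1 : ℕ) : ℤ) = 0 + N by push_cast; ring, hγ, ← hα]
      simp [γ]
  refine ⟨γ, isReducedLine_of_apply_add_eq α (by omega) hγ fun n hn hnN => ?_,
    hseg 0 (by omega)⟩
  obtain ⟨j, rfl⟩ : ∃ j : ℕ, n = (j + 1 : ℕ) := ⟨(n - 1).toNat, by omega⟩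
  rw [show ((j + 1 : ℕ) : ℤ) + 1 = (j + 2 : ℕ) by push_cast; ring,
    show ((j + 1 : ℕ) : ℤ) - 1 = (j : ℕ) by push_cast; ring]
  rcases Nat.lt_or_ge j L with hj | hj
  · rw [hseg _ (by omega), hseg _ (by omega), hseg _ (by omega)]
    exact ⟨hc.1 _ (by omega), hc.2 _ (by omega)⟩
  · obtain rfl : j = L := by omega
    have hlast : γ (j + 2 : ℕ) = α (c 1) := by
      rw [show ((j + 2 : ℕ) : ℤ) = (1 : ℕ) + N by push_cast; ring, hγ, hseg 1 (by omega)]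
    rw [hlast, hseg _ le_rfl, hseg _ (by omega), ← hα, α.map_adj_iff]
    exact ⟨hc.1 0 (by omega), hα1⟩

lemma Walk.IsPath.isReducedSegment {p : G.Walk u v} (hp : p.IsPath) :
    G.IsReducedSegment p.getVert p.length := by
  refine ⟨fun k hk => p.adj_getVert_succ hk, fun k hk h => ?_⟩
  have := hp.getVert_injOn (by simp only [Set.mem_ofPred_eq]; omega)
    (by simp only [Set.mem_ofPred_eq]; omega) h
  omega

lemma IsReducedSegment.shift {c : ℕ → V} {M : ℕ} (hc : G.IsReducedSegment c M) {i L : ℕ}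
    (hiL : i + L ≤ M) : G.IsReducedSegment (fun n => c (i + n)) L :=
  ⟨fun k hk => hc.1 (i + k) (by omega), fun k hk => hc.2 (i + k) (by omega)⟩

lemma exists_lt_lt_iso_apply_eq_of_finite_orbits {F : Set V} (hF : F.Finite)
    (horb : ∀ v, ∃ φ : G ≃g G, φ v ∈ F) (c : ℕ → V) {M : ℕ} (hM : 2 * hF.toFinset.card < M + 1) :
    ∃ k l m, k < l ∧ l < m ∧ m ≤ M ∧
      (∃ β : G ≃g G, β (c k) = c l) ∧ ∃ β : G ≃g G, β (c l) = c m := by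
  classical
  choose Φ hΦ using horb
  obtain ⟨f, -, hf⟩ := Finset.exists_lt_card_fiber_of_mul_lt_card_of_maps_to
    (s := Finset.range (M + 1)) (f := fun i => Φ (c i) (c i)) (n := 2)
    (fun i _ => hF.mem_toFinset.mpr (hΦ _)) (by simpa [mul_comm] using hM)
  obtain ⟨t, hts, ht⟩ := Finset.exists_subset_card_eq hf
  set e := t.orderEmbOfFin ht
  have he : ∀ a, e a ≤ M ∧ Φ (c (e a)) (c (e a)) = f := fun a => by
    simpa [Nat.lt_succ_iff] using hts (t.orderEmbOfFin_mem ht a)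
  have hiso : ∀ a b, ∃ β : G ≃g G, β (c (e a)) = c (e b) := fun a b =>
    ⟨(Φ (c (e b)))⁻¹ * Φ (c (e a)), by
      rw [RelIso.mul_apply, (he a).2, ← (he b).2, RelIso.inv_apply_self]⟩
  exact ⟨e 0, e 1, e 2, e.lt_iff_lt.mpr (by decide), e.lt_iff_lt.mpr (by decide), (he 2).1,
    hiso 0 1, hiso 1 2⟩

/-- If both `c k ↦ c l` and `c l ↦ c m` reverse the direction of `c`, their composite
preserves it. -/
lemma exists_iso_apply_eq_of_lt_lt (c : ℕ → V) {k l m : ℕ} (hkl : k < l) (hlm : l < m)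
    (hl : c (l + 1) ≠ c (l - 1)) {β β' : G ≃g G} (hβ : β (c k) = c l) (hβ' : β' (c l) = c m) :
    ∃ i j, i < j ∧ j ≤ m ∧ ∃ α : G ≃g G, α (c i) = c j ∧ α (c (i + 1)) ≠ c (j - 1) := by
  by_cases hflip : β (c (k + 1)) = c (l - 1)
  · by_cases hflip' : β' (c (l + 1)) = c (m - 1)
    · refine ⟨k, m, by omega, le_rfl, β' * β, by rw [RelIso.mul_apply, hβ, hβ'], ?_⟩
      rw [RelIso.mul_apply, hflip, ← hflip']
      exact β'.injective.ne hl.symm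
    · exact ⟨l, m, hlm, le_rfl, β', hβ', hflip'⟩
  · exact ⟨k, l, hkl, hlm.le, β, hβ, hflip⟩

lemma IsTree.biInfGeodesicSupport_nonempty (hG : G.IsTree)
    (hunb : ¬ ∃ C : ℕ, ∀ u v : V, G.dist u v ≤ C) {F : Set V} (hF : F.Finite)
    (horb : ∀ v, ∃ φ : G ≃g G, φ v ∈ F) : G.biInfGeodesicSupport.Nonempty := by
  push Not at hunb
  obtain ⟨u, v, huv⟩ := hunb (2 * hF.toFinset.card)
  obtain ⟨p, hp, hplen⟩ := hG.connected.exists_path_of_dist u v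
  have hc := hp.isReducedSegment
  obtain ⟨k, l, m, hkl, hlm, hm, ⟨β, hβ⟩, β', hβ'⟩ :=
    exists_lt_lt_iso_apply_eq_of_finite_orbits hF horb p.getVert (M := p.length) (by omega)
  have hl : p.getVert (l + 1) ≠ p.getVert (l - 1) := by
    simpa [show l - 1 + 2 = l + 1 by omega] using hc.2 (l - 1) (by omega)
  obtain ⟨i, j, hij, hj, α, hα, hα1⟩ := exists_iso_apply_eq_of_lt_lt p.getVert hkl hlm hl hβ hβ'
  obtain ⟨L, rfl⟩ : ∃ L, j = i + (L + 1) := ⟨j - i - 1, by omega⟩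
  obtain ⟨γ, hγ, -⟩ := (hc.shift (i := i) (L := L + 1) (by omega)).exists_isReducedLine_of_iso α
    hα (by simpa [← add_assoc] using hα1)
  exact ⟨γ 0, γ, hG.isBiInfGeodesic_of_isReducedLine hγ, 0, rfl⟩

lemma hasTwoRayDirections_of_forall_exists_adj_ne (h : ∀ x z : V, ∃ w, G.Adj x w ∧ w ≠ z)
    (v : V) : G.HasTwoRayDirections v := by
  choose next hnext using h
  intro z
  let F : ℕ → V × V := fun n => Nat.rec (v, next v z) (fun _ p => (p.2, next p.2 p.1)) n
  have hF : ∀ n, G.Adj (F n).1 (F n).2 := fun n => by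
    induction n with
    | zero => exact (hnext v z).1
    | succ n _ => exact (hnext _ _).1
  exact ⟨fun n => (F n).1, fun n => ⟨hF n, (hnext _ _).2⟩, rfl, (hnext v z).2⟩

lemma IsTree.biInfGeodesicSupport_eq_univ_iff [Nontrivial V] (hG : G.IsTree) :
    G.biInfGeodesicSupport = Set.univ ↔ ¬ ∃ v : V, ∃! w : V, G.Adj v w := by
  constructor
  · rintro hS ⟨v, w, -, huniq⟩
    obtain ⟨γ, hγ, k, rfl⟩ : v ∈ G.biInfGeodesicSupport := hS ▸ Set.mem_univ v
    have hnext := hγ.isReducedLine k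
    have hprev := (hγ.isReducedLine (k - 1)).1.symm
    rw [sub_add_cancel] at hprev
    exact hnext.2 ((huniq _ hnext.1).trans (huniq _ hprev).symm)
  · intro hleaf
    have hbranch : ∀ x z : V, ∃ w, G.Adj x w ∧ w ≠ z := by
      intro x z
      obtain ⟨y, hy⟩ := exists_ne x
      obtain ⟨w, hw, -⟩ := hG.connected.exists_adj_dist_add_one_eq hy.symm
      by_contra! hz
      exact hleaf ⟨x, z, hz w hw ▸ hw, fun w' hw' => hz w' hw'⟩
    ext v
    simp only [Set.mem_univ, iff_true, hG.mem_biInfGeodesicSupport_iff]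
    exact hasTwoRayDirections_of_forall_exists_adj_ne hbranch v

end SimpleGraph

/-- **Lemma `tprime`.** Let `T` be a tree with unbounded vertex set whose automorphism group
has finitely many orbits of vertices. Then the set `S` of vertices lying on some bi-infinite
geodesic is nonempty, is a subtree, is cobounded, is contained in every cobounded subtree
(hence is the unique minimal cobounded subtree), and equals the whole vertex set iff `T` has
no vertex of degree 1. -/
theorem minimal_cobounded_subtree (T : SimpleGraph V) (htree : T.IsTree)
    (hunbounded : ¬ ∃ C : ℕ, ∀ u v : V, T.dist u v ≤ C)
    (horbits : ∃ F : Set V, F.Finite ∧ ∀ v : V, ∃ φ : T ≃g T, φ v ∈ F) :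
    let S : Set V := {v | ∃ γ : ℤ → V, IsBiInfGeodesic T γ ∧ ∃ n : ℤ, γ n = v}
    S.Nonempty ∧
    IsSubtree T S ∧
    IsCoboundedVertexSet T S ∧
    (∀ S' : Set V, IsSubtree T S' → IsCoboundedVertexSet T S' → S ⊆ S') ∧
    (S = Set.univ ↔ ¬ ∃ v : V, ∃! w : V, T.Adj v w) := by
  obtain ⟨F, hF, horb⟩ := horbits
  have hne := htree.biInfGeodesicSupport_nonempty hunbounded hF horb
  have : Nontrivial V := by
    by_contra h
    rw [not_nontrivial_iff_subsingleton] at h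
    exact hunbounded ⟨0, fun u v => by simp [Subsingleton.elim u v]⟩
  refine ⟨hne, htree.induce_biInfGeodesicSupport_connected hne, ?_,
    fun S' hS' hcob => htree.biInfGeodesicSupport_subset hS' hcob,
    htree.biInfGeodesicSupport_eq_univ_iff⟩
  obtain ⟨s, hs⟩ := hne
  exact SimpleGraph.isCoboundedVertexSet_of_finite_orbits
    (fun φ v hv => φ.apply_mem_biInfGeodesicSupport hv) hs hF horb
end

section
/- Let T be a tree whose vertex set is unbounded in the graph metric and whose automorphism group Aut(T) has only finitely many orbits on the vertex set. Then Aut(T) contains a hyperbolic element: there exist an automorphism g of T, a bi-infinite geodesic γ : ℤ → V(T), and an integer n > 0 such that g(γ(i)) = γ(i + n) for all i ∈ ℤ. -/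
/-!
Take a geodesic segment longer than twice the number of vertex orbits. By pigeonhole three of
its vertices `x a, x b, x c` (`a < b < c`) lie in one orbit, giving automorphisms
`g₁ : x a ↦ x b` and `g₂ : x b ↦ x c`. An automorphism `g` with `g (x a) = x b` and
`g (x (a + 1)) ≠ x (b - 1)` translates the bi-infinite walk `⋃ₖ gᵏ [x a, x b]`, which never
backtracks and is therefore a geodesic in a tree. If both `g₁` and `g₂` fold back in this way,
`g₂ * g₁` does not: it sends `x (a + 1)` to `g₂ (x (b - 1)) ≠ g₂ (x (b + 1)) = x (c - 1)`.
-/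

variable {V : Type*}

open Finset in
lemma exists_lt_lt_apply_eq_of_mapsTo {α : Type*} {f : ℕ → α} {s : Finset α}
    (hf : ∀ i ≤ 2 * #s, f i ∈ s) :
    ∃ a b c, a < b ∧ b < c ∧ c ≤ 2 * #s ∧ f a = f b ∧ f b = f c := by
  classical
  obtain ⟨y, -, hy⟩ := exists_lt_card_fiber_of_mul_lt_card_of_maps_to
    (s := range (2 * #s + 1)) (t := s) (n := 2)
    (fun i hi ↦ hf i (Nat.lt_succ_iff.mp (mem_range.mp hi)))
    (by rw [card_range]; omega)
  obtain ⟨t, hts, ht⟩ := exists_subset_card_eq hy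
  have mem (i : Fin 3) : t.orderEmbOfFin ht i ∈ {i ∈ range (2 * #s + 1) | f i = y} :=
    hts (t.orderEmbOfFin_mem ht i)
  simp only [mem_filter, mem_range] at mem
  refine ⟨_, _, _, (t.orderEmbOfFin ht).strictMono (show (0 : Fin 3) < 1 by decide),
    (t.orderEmbOfFin ht).strictMono (show (1 : Fin 3) < 2 by decide), Nat.lt_succ_iff.mp (mem 2).1,
    (mem 0).2.trans (mem 1).2.symm, (mem 1).2.trans (mem 2).2.symm⟩

namespace SimpleGraph

variable {G : SimpleGraph V}

lemma Walk.IsPath.getVert_ne {u v : V} {w : G.Walk u v} (hw : w.IsPath) {i j : ℕ} (hij : i ≠ j)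
    (hi : i ≤ w.length) (hj : j ≤ w.length) : w.getVert i ≠ w.getVert j :=
  fun h ↦ hij (hw.getVert_injOn hi hj h)

lemma IsTree.eq_of_adj_of_dist_add_one_eq_s9 (hG : G.IsTree) {x y z z' : V}
    (hz : G.Adj z y) (hz' : G.Adj z' y)
    (h : G.dist x z + 1 = G.dist x y) (h' : G.dist x z' + 1 = G.dist x y) : z = z' := by
  obtain ⟨p, -, hp⟩ := hG.connected.exists_path_of_dist x z
  obtain ⟨p', -, hp'⟩ := hG.connected.exists_path_of_dist x z'
  have hq : (p.concat hz).IsPath := Walk.isPath_of_length_eq_dist _ (by simp [hp, h])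
  have hq' : (p'.concat hz').IsPath := Walk.isPath_of_length_eq_dist _ (by simp [hp', h'])
  have := congrArg (fun q : G.Path x y => q.1.penultimate)
    ((hG.isAcyclic.subsingleton_path x y).elim ⟨_, hq⟩ ⟨_, hq'⟩)
  simpa [Walk.penultimate_concat] using this

lemma IsTree.dist_eq_add_one_of_adj_of_ne (hG : G.IsTree) {x y y' z : V}
    (hy' : G.Adj y' y) (hz : G.Adj y z) (hne : y' ≠ z) (h : G.dist x y' + 1 = G.dist x y) :
    G.dist x z = G.dist x y + 1 :=
  (hG.dist_eq_dist_add_one_of_adj x hz).resolve_left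
    fun h₁ ↦ hne (hG.eq_of_adj_of_dist_add_one_eq_s9 hy' hz.symm h h₁.symm)

lemma IsTree.isBiInfGeodesic (hG : G.IsTree) {γ : ℤ → V}
    (hadj : ∀ i, G.Adj (γ i) (γ (i + 1))) (hnb : ∀ i, γ (i + 2) ≠ γ i) :
    IsBiInfGeodesic G γ := by
  have step : ∀ (N : ℕ) i, G.dist (γ i) (γ (i + N + 1)) = G.dist (γ i) (γ (i + N)) + 1 := by
    intro N
    induction N with
    | zero => simp [dist_eq_one_iff_adj.mpr (hadj _)]
    | succ N ih =>
      intro i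
      push_cast
      rw [← add_assoc]
      refine hG.dist_eq_add_one_of_adj_of_ne (hadj _) (hadj _) ?_ (ih i).symm
      simpa [add_assoc] using (hnb (i + N)).symm
  have dist_add : ∀ (N : ℕ) i, G.dist (γ i) (γ (i + N)) = N := by
    intro N
    induction N with
    | zero => simp
    | succ N ih => intro i; push_cast; rw [← add_assoc, step, ih]
  intro m n
  rcases le_total n m with h | h
  · obtain ⟨k, rfl⟩ : ∃ k : ℕ, m = n + k := ⟨(m - n).toNat, by omega⟩
    rw [dist_comm, dist_add]; omega
  · obtain ⟨k, rfl⟩ : ∃ k : ℕ, n = m + k := ⟨(n - m).toNat, by omega⟩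
    rw [dist_add]; omega

namespace Iso

def IsHyperbolic (g : G ≃g G) : Prop :=
  ∃ (γ : ℤ → V) (n : ℤ), 0 < n ∧ IsBiInfGeodesic G γ ∧ ∀ i, g (γ i) = γ (i + n)

def periodicExtension (g : G ≃g G) (n : ℕ) (p : ℕ → V) (i : ℤ) : V :=
  (g ^ (i / n)) (p (i % n).toNat)

variable (g : G ≃g G) {n : ℕ} (p : ℕ → V)

lemma periodicExtension_add (hn : 0 < n) (i : ℤ) :
    g.periodicExtension n p (i + n) = g (g.periodicExtension n p i) := by
  have hn' : (n : ℤ) ≠ 0 := by omega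
  rw [periodicExtension, periodicExtension, Int.add_ediv_of_dvd_right (dvd_refl _),
    Int.ediv_self hn', Int.add_emod_right, add_comm, zpow_one_add, RelIso.mul_apply]

lemma periodicExtension_natCast {r : ℕ} (hr : r < n) : g.periodicExtension n p r = p r := by
  have hr' : (r : ℤ) < n := by omega
  rw [periodicExtension, Int.ediv_eq_zero_of_lt (by omega) hr', Int.emod_eq_of_lt (by omega) hr',
    zpow_zero, RelIso.one_apply, Int.toNat_natCast]

end Iso

lemma IsTree.isHyperbolic_of_segment (hG : G.IsTree) (g : G ≃g G) {n : ℕ} (hn : 0 < n)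
    {p : ℕ → V} (hadj : ∀ r < n, G.Adj (p r) (p (r + 1)))
    (hnb : ∀ r, r + 2 ≤ n → p (r + 2) ≠ p r)
    (h₀ : g (p 0) = p n) (h₁ : g (p 1) ≠ p (n - 1)) : g.IsHyperbolic := by
  set γ := g.periodicExtension n p
  have htr : ∀ i, γ (i + n) = g (γ i) := g.periodicExtension_add p hn
  have hγ : ∀ r ≤ n, γ r = p r := by
    intro r hr
    rcases hr.lt_or_eq with hr | rfl
    · exact g.periodicExtension_natCast p hr
    · rw [← zero_add (r : ℤ), htr, ← Nat.cast_zero,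
        show γ (0 : ℕ) = p 0 from g.periodicExtension_natCast p hn, h₀]
  have of_Ico {P : ℤ → Prop} (hP : Function.Periodic P n) (h : ∀ r < n, P r) i : P i := by
    obtain ⟨j, ⟨hj0, hjn⟩, hij⟩ := hP.exists_mem_Ico₀ (by exact_mod_cast hn) i
    lift j to ℕ using hj0
    exact hij ▸ h j (by exact_mod_cast hjn)
  refine ⟨γ, n, by exact_mod_cast hn, hG.isBiInfGeodesic ?_ ?_, fun i ↦ (htr i).symm⟩
  · refine of_Ico (fun i ↦ ?_) fun r hr ↦ ?_
    · rw [add_right_comm i, htr, htr, g.map_adj_iff]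
    · rw [hγ r hr.le, ← Nat.cast_succ, hγ (r + 1) hr]
      exact hadj r hr
  · refine of_Ico (fun i ↦ ?_) fun r hr ↦ ?_
    · rw [add_right_comm i, htr, htr, g.injective.ne_iff]
    · rw [hγ r hr.le]
      by_cases hr₂ : r + 2 ≤ n
      · rw [show (r : ℤ) + 2 = (r + 2 : ℕ) by push_cast; rfl, hγ (r + 2) hr₂]
        exact hnb r hr₂
      · obtain rfl : r = n - 1 := by omega
        rwa [show ((n - 1 : ℕ) : ℤ) + 2 = 1 + n by omega, htr, ← Nat.cast_one, hγ 1 hn]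

lemma IsTree.isHyperbolic_of_isPath (hG : G.IsTree) {u v : V} {w : G.Walk u v} (hw : w.IsPath)
    (g : G ≃g G) {a b : ℕ} (hab : a < b) (hb : b ≤ w.length)
    (ha : g (w.getVert a) = w.getVert b) (ha₁ : g (w.getVert (a + 1)) ≠ w.getVert (b - 1)) :
    g.IsHyperbolic := by
  refine hG.isHyperbolic_of_segment g (n := b - a) (p := fun r ↦ w.getVert (a + r)) (by omega)
    (fun r hr ↦ w.adj_getVert_succ (by omega))
    (fun r hr ↦ hw.getVert_ne (by omega) (by omega) (by omega))
    (by simpa [hab.le]) ?_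
  rwa [show a + (b - a - 1) = b - 1 by omega]

lemma IsTree.isHyperbolic_or_isHyperbolic_or_isHyperbolic_mul (hG : G.IsTree) {u v : V}
    {w : G.Walk u v} (hw : w.IsPath) (g₁ g₂ : G ≃g G) {a b c : ℕ} (hab : a < b)
    (hbc : b < c) (hc : c ≤ w.length) (h₁ : g₁ (w.getVert a) = w.getVert b)
    (h₂ : g₂ (w.getVert b) = w.getVert c) :
    g₁.IsHyperbolic ∨ g₂.IsHyperbolic ∨ (g₂ * g₁).IsHyperbolic := by
  by_cases hb₁ : g₁ (w.getVert (a + 1)) = w.getVert (b - 1)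
  · by_cases hb₂ : g₂ (w.getVert (b + 1)) = w.getVert (c - 1)
    · refine .inr <| .inr <| hG.isHyperbolic_of_isPath hw _ (hab.trans hbc) hc
        (by rw [RelIso.mul_apply, h₁, h₂]) ?_
      rw [RelIso.mul_apply, hb₁, ← hb₂, g₂.injective.ne_iff]
      exact hw.getVert_ne (by omega) (by omega) (by omega)
    · exact .inr <| .inl <| hG.isHyperbolic_of_isPath hw g₂ hbc hc h₂ hb₂
  · exact .inl <| hG.isHyperbolic_of_isPath hw g₁ hab (by omega) h₁ hb₁

end SimpleGraph

/-- **Claim inside the proof of Lemma `tprime`.** A tree with unbounded vertex set whose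
automorphism group has finitely many orbits of vertices admits a hyperbolic automorphism:
an automorphism translating some bi-infinite geodesic by a positive amount. -/
theorem exists_hyperbolic_automorphism (T : SimpleGraph V) (htree : T.IsTree)
    (hunbounded : ¬ ∃ C : ℕ, ∀ u v : V, T.dist u v ≤ C)
    (horbits : ∃ F : Set V, F.Finite ∧ ∀ v : V, ∃ φ : T ≃g T, φ v ∈ F) :
    ∃ (g : T ≃g T) (γ : ℤ → V) (n : ℤ), 0 < n ∧ IsBiInfGeodesic T γ ∧
      ∀ i : ℤ, g (γ i) = γ (i + n) := by
  obtain ⟨F, hF, hφ⟩ := horbits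
  choose φ hφF using hφ
  obtain ⟨u, v, huv⟩ : ∃ u v, 2 * hF.toFinset.card < T.dist u v := by
    by_contra! h
    exact hunbounded ⟨_, h⟩
  obtain ⟨w, hw, hwuv⟩ := htree.connected.exists_path_of_dist u v
  obtain ⟨a, b, c, hab, hbc, hc, hfab, hfbc⟩ :=
    exists_lt_lt_apply_eq_of_mapsTo (f := fun i ↦ φ (w.getVert i) (w.getVert i))
      (s := hF.toFinset) fun i _ ↦ hF.mem_toFinset.mpr (hφF _)
  have sameOrbit {i j : ℕ} (h : φ (w.getVert i) (w.getVert i) = φ (w.getVert j) (w.getVert j)) :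
      ((φ (w.getVert j))⁻¹ * φ (w.getVert i)) (w.getVert i) = w.getVert j := by
    rw [RelIso.mul_apply, h, RelIso.inv_apply_self]
  rcases htree.isHyperbolic_or_isHyperbolic_or_isHyperbolic_mul hw _ _ hab hbc (by omega)
    (sameOrbit hfab) (sameOrbit hfbc) with h | h | h <;> exact ⟨_, h⟩
end

section
/- Let T be a tree, and let J be a metric space with uniformly finite balls: for every r ≥ 0 there is a constant C(r) such that every closed ball of radius r in J contains at most C(r) points. Suppose there is a quasi-isometry f from the vertex set of T (with the graph metric) to J. Then there exist a tree T'' of bounded valency (there is D such that every vertex of T'' has degree at most D) and a quasi-isometry from the vertex set of T'' (with the graph metric) to J. -/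
universe u v

variable {V : Type u} {J : Type v}

/-- A quasi-isometry from the vertex set of a graph (with the graph metric) to a metric
space. -/
def IsGraphQuasiIsometry (T : SimpleGraph V) [MetricSpace J] (f : V → J) : Prop :=
  ∃ μ α : ℝ, 1 ≤ μ ∧ 0 ≤ α ∧
    (∀ u v : V,
      (1 / μ) * (T.dist u v : ℝ) - α ≤ dist (f u) (f v) ∧
      dist (f u) (f v) ≤ μ * (T.dist u v : ℝ) + α) ∧
    ∀ x : J, ∃ v : V, dist x (f v) ≤ α

/-!
Root `T` at `r` and write `ℓ = d(·, r)`. Identify vertices with the same image under `f` and the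
same level; as `f` is a quasi-isometry, identified vertices are at bounded distance `K`. For
`2k ≥ K`, join each class to the class of the ancestor of a representative at level
`(⌊ℓ/k⌋ - 1)k`: this ancestor does not depend on the representative, and it lowers the level, so
these edges form a tree. Its edges join vertices at `T`-distance `< 2k`, hence the neighbours of a
class have images in a ball of fixed radius and levels in a window of width `4k`; since a class is
determined by its image and level, uniformly finite balls bound the valency. The ancestor chains
of `u` and `v` through the levels `jk` meet below the branch point of `u` and `v`, which gives
`d''(u, v) ≤ d_T(u, v) + 5`, so `f` descends to a quasi-isometry on the new tree.
-/

lemma Nat.div_add_div_le_two_mul_div_add_add_one (a b d : ℕ) {k : ℕ} (hk : 0 < k) :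
    a / k + b / k ≤ 2 * ((a + b - d) / (2 * k)) + d + 1 := by
  set j := (a + b - d) / (2 * k)
  have ha := Nat.div_mul_le_self a k
  have hb := Nat.div_mul_le_self b k
  have hj : a + b - d < j * (2 * k) + 2 * k := Nat.lt_div_mul_add (Nat.mul_pos two_pos hk)
  have hd : d ≤ d * k := Nat.le_mul_of_pos_right d hk
  have e1 : j * (2 * k) = 2 * (j * k) := by ring
  have e2 : (a / k + b / k) * k = a / k * k + b / k * k := by ring
  have e3 : (2 * j + d + 2) * k = 2 * (j * k) + d * k + 2 * k := by ring
  have : (a / k + b / k) * k < (2 * j + d + 2) * k := by omega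
  have := Nat.lt_of_mul_lt_mul_right this
  omega

namespace SimpleGraph

variable {G : SimpleGraph V} {u v w w' : V}

lemma IsAcyclic.eq_of_adj_of_dist_lt (hG : G.IsAcyclic) (hw : G.Adj u w) (hw' : G.Adj u w')
    (h : G.dist w v < G.dist u v) (h' : G.dist w' v < G.dist u v) : w = w' := by
  have geodesic : ∀ x, G.Adj u x → G.dist x v < G.dist u v →
      ∃ p : G.Walk u v, p.IsPath ∧ p.snd = x := by
    intro x hx hlt
    have hxv : G.Reachable x v :=
      hx.symm.reachable.trans (Reachable.of_dist_ne_zero (by omega))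
    obtain ⟨q, hq⟩ := hxv.exists_walk_length_eq_dist
    have hlen : (Walk.cons hx q).length = G.dist u v :=
      le_antisymm (by simp [hq]; omega) (dist_le _)
    exact ⟨_, Walk.isPath_of_length_eq_dist _ hlen, by simp⟩
  obtain ⟨p, hp, rfl⟩ := geodesic w hw h
  obtain ⟨p', hp', rfl⟩ := geodesic w' hw' h'
  rw [Subtype.mk.inj ((hG.subsingleton_path u v).elim ⟨p, hp⟩ ⟨p', hp'⟩)]

variable (G) in
open Classical in
noncomputable def parent (r u : V) : V :=
  if h : ∃ w, G.Adj u w ∧ G.dist w r < G.dist u r then h.choose else u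

variable {r : V}

@[simp]
lemma parent_self : G.parent r r = r := by
  simp [parent]

lemma Connected.adj_parent (hG : G.Connected) (hu : u ≠ r) :
    G.Adj u (G.parent r u) ∧ G.dist (G.parent r u) r + 1 = G.dist u r := by
  have hex : ∃ w, G.Adj u w ∧ G.dist w r < G.dist u r := by
    obtain ⟨p, hp⟩ := hG.exists_walk_length_eq_dist u r
    have hnil : ¬p.Nil := fun h => hu h.eq
    refine ⟨p.snd, p.adj_snd hnil, ?_⟩
    have := p.length_tail_add_one hnil
    have := dist_le p.tail
    omega
  have hspec := hex.choose_spec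
  rw [parent, dif_pos hex]
  refine ⟨hspec.1, ?_⟩
  have := hspec.1.diff_dist_adj (u := r)
  have := dist_comm (G := G) (u := r) (v := u)
  have := dist_comm (G := G) (u := r) (v := hex.choose)
  omega

lemma IsAcyclic.eq_parent_of_adj (hG : G.IsAcyclic) (h : G.Adj u w)
    (hw : G.dist w r < G.dist u r) : w = G.parent r u := by
  have hex : ∃ w, G.Adj u w ∧ G.dist w r < G.dist u r := ⟨w, h, hw⟩
  rw [parent, dif_pos hex]
  exact hG.eq_of_adj_of_dist_lt h hex.choose_spec.1 hw hex.choose_spec.2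

lemma IsTree.eq_parent_or_eq_parent (hG : G.IsTree) (h : G.Adj u w) :
    w = G.parent r u ∨ u = G.parent r w := by
  have := dist_comm (G := G) (u := r) (v := u)
  have := dist_comm (G := G) (u := r) (v := w)
  rcases hG.dist_eq_dist_add_one_of_adj r h with hd | hd
  · exact .inl (hG.isAcyclic.eq_parent_of_adj h (by omega))
  · exact .inr (hG.isAcyclic.eq_parent_of_adj h.symm (by omega))

lemma IsTree.dist_parent_add_one (hG : G.IsTree) (huv : u ≠ v) (h : G.dist v r ≤ G.dist u r) :
    G.dist (G.parent r u) v + 1 = G.dist u v := by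
  induction hn : G.dist u v using Nat.strong_induction_on generalizing u with
  | _ n ih =>
  have hur : u ≠ r := by
    rintro rfl
    exact huv (hG.connected.dist_eq_zero_iff.mp (by simpa using h)).symm
  obtain ⟨hadj, hlev⟩ := hG.connected.adj_parent hur
  have := dist_comm (G := G) (u := v) (v := u)
  have := dist_comm (G := G) (u := v) (v := G.parent r u)
  rcases hG.dist_eq_dist_add_one_of_adj v hadj with hd | hd
  · omega
  -- The parent of `u` is farther from `v`, so the first step from `u` towards `v` goes down
  -- to a child `w` of `u`; the induction hypothesis at `w` then contradicts the choice of `w`.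
  obtain ⟨hw, hwlev⟩ := hG.connected.adj_parent (r := v) huv
  generalize G.parent v u = w at hw hwlev
  have hwu : u = G.parent r w := by
    refine (hG.eq_parent_or_eq_parent hw).resolve_left fun hw' => ?_
    rw [hw'] at hwlev
    omega
  have hwr : w ≠ r := fun hwr => hur (by rw [hwu, hwr, parent_self])
  have hwlev' := (hG.connected.adj_parent hwr).2
  rw [← hwu] at hwlev'
  have := ih (G.dist w v) (by omega) (u := w) (by rintro rfl; omega) (by omega) rfl
  rw [← hwu] at this
  omega

-- The ancestor of `u` at distance `M` from `r` (for `M ≤ G.dist u r`), not `M` steps up.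
variable (G) in
noncomputable def ancestor (r u : V) (M : ℕ) : V :=
  (G.parent r)^[G.dist u r - M] u

lemma Connected.dist_iterate_parent (hG : G.Connected) {n : ℕ} (hn : n ≤ G.dist u r) :
    G.dist ((G.parent r)^[n] u) r + n = G.dist u r := by
  induction n with
  | zero => rfl
  | succ n ih =>
    have ih := ih (by omega)
    have hne : (G.parent r)^[n] u ≠ r := by
      intro h
      rw [h, dist_self] at ih
      omega
    rw [Function.iterate_succ_apply']
    have := (hG.adj_parent hne).2
    omega

lemma Connected.dist_ancestor (hG : G.Connected) {M : ℕ} (hM : M ≤ G.dist u r) :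
    G.dist (G.ancestor r u M) r = M := by
  have := hG.dist_iterate_parent (u := u) (r := r) (n := G.dist u r - M) (by omega)
  rw [ancestor]
  omega

lemma Connected.dist_parent_le_one (hG : G.Connected) (u : V) : G.dist u (G.parent r u) ≤ 1 := by
  by_cases hu : u = r
  · simp [hu]
  · exact (dist_eq_one_iff_adj.mpr (hG.adj_parent hu).1).le

lemma Connected.dist_iterate_parent_le (hG : G.Connected) (n : ℕ) (u : V) :
    G.dist u ((G.parent r)^[n] u) ≤ n := by
  induction n with
  | zero => simp
  | succ n ih =>
    rw [Function.iterate_succ_apply']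
    have := hG.dist_triangle (u := u) (v := (G.parent r)^[n] u)
      (w := G.parent r ((G.parent r)^[n] u))
    have := hG.dist_parent_le_one (r := r) ((G.parent r)^[n] u)
    omega

lemma Connected.dist_ancestor_le (hG : G.Connected) (u : V) (M : ℕ) :
    G.dist u (G.ancestor r u M) ≤ G.dist u r - M :=
  hG.dist_iterate_parent_le _ u

lemma Connected.ancestor_ancestor (hG : G.Connected) {M M' : ℕ} (hM' : M' ≤ M)
    (hM : M ≤ G.dist u r) : G.ancestor r (G.ancestor r u M) M' = G.ancestor r u M' := by
  rw [ancestor, hG.dist_ancestor hM, ancestor, ancestor, ← Function.iterate_add_apply]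
  congr 1
  omega

lemma Connected.ancestor_parent (hG : G.Connected) {M : ℕ} (hM : M < G.dist u r) :
    G.ancestor r (G.parent r u) M = G.ancestor r u M := by
  have hur : u ≠ r := by rintro rfl; simp at hM
  have := (hG.adj_parent hur).2
  rw [ancestor, ancestor, ← Function.iterate_succ_apply]
  congr 1
  omega

lemma IsTree.ancestor_eq_ancestor (hG : G.IsTree) {M : ℕ}
    (h : 2 * M + G.dist u v ≤ G.dist u r + G.dist v r) :
    G.ancestor r u M = G.ancestor r v M := by
  -- Replacing the deeper of the two vertices by its parent keeps the hypothesis and shortens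
  -- `dist u v`.
  have step : ∀ u v, u ≠ v → G.dist v r ≤ G.dist u r →
      2 * M + G.dist u v ≤ G.dist u r + G.dist v r →
      G.ancestor r u M = G.ancestor r (G.parent r u) M ∧
        2 * M + G.dist (G.parent r u) v ≤ G.dist (G.parent r u) r + G.dist v r ∧
        G.dist (G.parent r u) v < G.dist u v := by
    intro u v huv hlev h
    have hd := hG.dist_parent_add_one huv hlev
    have hur : u ≠ r := by rintro rfl; simp_all
    have hpar := (hG.connected.adj_parent hur).2
    exact ⟨(hG.connected.ancestor_parent (by omega)).symm, by omega, by omega⟩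
  induction hn : G.dist u v using Nat.strong_induction_on generalizing u v with
  | _ n ih =>
  by_cases huv : u = v
  · rw [huv]
  rcases le_total (G.dist v r) (G.dist u r) with hlev | hlev
  · obtain ⟨h1, h2, h3⟩ := step u v huv hlev h
    rw [h1]
    exact ih _ (by omega) h2 rfl
  · have hvu := dist_comm (G := G) (u := u) (v := v)
    obtain ⟨h1, h2, h3⟩ := step v u (Ne.symm huv) hlev (by omega)
    have := dist_comm (G := G) (u := u) (v := G.parent r v)
    rw [h1]
    exact ih _ (by omega) (by omega) rfl

section ParentMap

variable {W : Type*} (par : W → W) (rank : W → ℕ) (root : W)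

lemma fromRel_parent_eq_of_adj_of_rank_le (hroot : par root = root)
    (hrank : ∀ a, a ≠ root → rank (par a) < rank a) {a b : W}
    (h : (fromRel fun a b => par a = b).Adj a b) (hab : rank b ≤ rank a) : b = par a := by
  obtain ⟨hne, hab' | hba⟩ := (fromRel_adj _ a b).mp h
  · exact hab'.symm
  · have hb : b ≠ root := fun hb => hne (by rw [← hba, hb, hroot])
    have := hrank b hb
    rw [hba] at this
    omega

lemma isTree_fromRel_parent (hroot : par root = root)
    (hrank : ∀ a, a ≠ root → rank (par a) < rank a) :
    (fromRel fun a b => par a = b).IsTree := by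
  classical
  set T := fromRel fun a b => par a = b
  have reach : ∀ a, T.Reachable a root := by
    intro a
    induction hn : rank a using Nat.strong_induction_on generalizing a with
    | _ n ih =>
    by_cases ha : a = root
    · rw [ha]
    have hlt := hrank a ha
    have hadj : T.Adj a (par a) :=
      (fromRel_adj _ _ _).mpr ⟨fun h => by rw [← h] at hlt; omega, .inl rfl⟩
    exact hadj.reachable.trans (ih _ (by omega) _ rfl)
  refine ⟨(connected_iff_exists_forall_reachable T).mpr ⟨root, fun a => (reach a).symm⟩,
    fun v c hc => ?_⟩
  -- At a vertex of maximal rank on the cycle, both cycle neighbours would have to be its parent.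
  obtain ⟨m, hm, hmax⟩ := c.support.toFinset.exists_max_image rank ⟨v, by simp⟩
  rw [List.mem_toFinset] at hm
  have hc' := hc.rotate hm
  set c' := c.rotate m hm
  have hnil : ¬c'.Nil := hc'.not_nil
  have hsnd := fromRel_parent_eq_of_adj_of_rank_le par rank root hroot hrank (c'.adj_snd hnil)
    (hmax _ (List.mem_toFinset.mpr
      ((c.mem_support_rotate_iff m hm).mp (c'.getVert_mem_support 1))))
  have hpen := fromRel_parent_eq_of_adj_of_rank_le par rank root hroot hrank
    (c'.adj_penultimate hnil).symm
    (hmax _ (List.mem_toFinset.mpr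
      ((c.mem_support_rotate_iff m hm).mp (c'.getVert_mem_support (c'.length - 1)))))
  exact hc'.snd_ne_penultimate (hsnd.trans hpen.symm)

end ParentMap

lemma fromRel_parent_dist_iterate_le {W : Type*} {par : W → W}
    (hc : (fromRel fun a b => par a = b).Connected) (a : W) (i : ℕ) :
    (fromRel fun a b => par a = b).dist a (par^[i] a) ≤ i := by
  induction i with
  | zero => simp
  | succ i ih =>
    rw [Function.iterate_succ_apply']
    generalize par^[i] a = x at ih ⊢
    have hx : (fromRel fun a b => par a = b).dist x (par x) ≤ 1 := by
      by_cases h : x = par x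
      · rw [← h, dist_self]; omega
      · exact (dist_eq_one_iff_adj.mpr ((fromRel_adj _ _ _).mpr ⟨h, .inl rfl⟩)).le
    have := hc.dist_triangle (u := a) (v := x) (w := par x)
    omega

section CoarseTree

variable (G) (r) {X : Type*} (g : V → X) (k : ℕ)

noncomputable def coarseParent (u : V) : V :=
  G.ancestor r u ((G.dist u r / k - 1) * k)

abbrev CoarseVertex : Type u := Quotient (Setoid.ker fun v => (g v, G.dist v r))

-- Independent of the representative `a.out` by `IsTree.coarseParent_eq_of_mk_eq`.
noncomputable def coarseTreeParent (a : G.CoarseVertex r g) : G.CoarseVertex r g :=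
  Quotient.mk _ (G.coarseParent r k a.out)

noncomputable def coarseTree : SimpleGraph (G.CoarseVertex r g) :=
  fromRel fun a b => G.coarseTreeParent r g k a = b

variable {G r g k}

lemma Connected.dist_coarseParent (hG : G.Connected) (u : V) :
    G.dist (G.coarseParent r k u) r = (G.dist u r / k - 1) * k := by
  refine hG.dist_ancestor ?_
  have := Nat.div_mul_le_self (G.dist u r) k
  rw [Nat.sub_one_mul]
  omega

lemma Connected.dist_coarseParent_lt (hG : G.Connected) (hk : 0 < k) (u : V) :
    G.dist u (G.coarseParent r k u) < 2 * k := by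
  have := hG.dist_ancestor_le (r := r) u ((G.dist u r / k - 1) * k)
  have := Nat.lt_div_mul_add (a := G.dist u r) hk
  rw [coarseParent]
  rw [Nat.sub_one_mul] at *
  omega

lemma IsTree.coarseParent_eq_of_mk_eq (hG : G.IsTree) (hg : ∀ u v, g u = g v → G.dist u v ≤ 2 * k)
    (h : (Quotient.mk _ u : G.CoarseVertex r g) = Quotient.mk _ v) :
    G.coarseParent r k u = G.coarseParent r k v := by
  obtain ⟨hguv, hlev⟩ : g u = g v ∧ G.dist u r = G.dist v r := by
    simpa [Setoid.ker_def] using Quotient.exact h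
  rw [coarseParent, coarseParent, hlev]
  refine hG.ancestor_eq_ancestor ?_
  have := hg u v hguv
  have := hG.connected.dist_triangle (u := u) (v := r) (w := v)
  have := dist_comm (G := G) (u := r) (v := v)
  have := Nat.div_mul_le_self (G.dist v r) k
  rw [Nat.sub_one_mul]
  omega

lemma IsTree.coarseTreeParent_mk (hG : G.IsTree) (hg : ∀ u v, g u = g v → G.dist u v ≤ 2 * k)
    (u : V) :
    G.coarseTreeParent r g k (Quotient.mk _ u) = Quotient.mk _ (G.coarseParent r k u) :=
  congrArg _ (hG.coarseParent_eq_of_mk_eq hg (Quotient.out_eq _))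

lemma dist_out_mk (u : V) :
    G.dist (Quotient.mk _ u : G.CoarseVertex r g).out r = G.dist u r := by
  have := Quotient.mk_out (s := Setoid.ker fun v => (g v, G.dist v r)) u
  simp_all [Setoid.ker_def]

lemma Connected.isTree_coarseTree (hG : G.Connected) (hk : 0 < k) :
    (G.coarseTree r g k).IsTree := by
  refine isTree_fromRel_parent _ (fun a => G.dist a.out r) (Quotient.mk _ r) ?_ ?_
  · have hr : (Quotient.mk _ r : G.CoarseVertex r g).out = r :=
      hG.dist_eq_zero_iff.mp (by simp [dist_out_mk])
    simp [coarseTreeParent, coarseParent, ancestor, hr]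
  · intro a ha
    have hpos : 0 < G.dist a.out r := by
      refine Nat.pos_of_ne_zero fun h => ha ?_
      rw [← Quotient.out_eq a, hG.dist_eq_zero_iff.mp h]
    simp only [coarseTreeParent, dist_out_mk, hG.dist_coarseParent]
    have := Nat.div_mul_le_self (G.dist a.out r) k
    rw [Nat.sub_one_mul]
    omega

lemma IsTree.coarseTreeParent_mk_ancestor (hG : G.IsTree)
    (hg : ∀ u v, g u = g v → G.dist u v ≤ 2 * k) (hk : 0 < k) {j : ℕ}
    (hj : (j + 1) * k ≤ G.dist u r) :
    G.coarseTreeParent r g k (Quotient.mk _ (G.ancestor r u ((j + 1) * k))) =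
      Quotient.mk _ (G.ancestor r u (j * k)) := by
  rw [hG.coarseTreeParent_mk hg, coarseParent, hG.connected.dist_ancestor hj,
    Nat.mul_div_cancel _ hk, Nat.add_sub_cancel,
    hG.connected.ancestor_ancestor (Nat.mul_le_mul_right _ (Nat.le_succ j)) hj]

lemma IsTree.iterate_coarseTreeParent_mk_ancestor (hG : G.IsTree)
    (hg : ∀ u v, g u = g v → G.dist u v ≤ 2 * k) (hk : 0 < k) {i j : ℕ}
    (hj : j * k ≤ G.dist u r) (hi : i ≤ j) :
    (G.coarseTreeParent r g k)^[i] (Quotient.mk _ (G.ancestor r u (j * k))) =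
      Quotient.mk _ (G.ancestor r u ((j - i) * k)) := by
  induction i with
  | zero => rfl
  | succ i ih =>
    have hji : j - i = j - (i + 1) + 1 := by omega
    have hle : (j - (i + 1) + 1) * k ≤ j * k := Nat.mul_le_mul_right _ (by omega)
    rw [Function.iterate_succ_apply', ih (by omega), hji]
    exact hG.coarseTreeParent_mk_ancestor hg hk (by omega)

lemma IsTree.coarseTree_dist_mk_ancestor_le (hG : G.IsTree)
    (hg : ∀ u v, g u = g v → G.dist u v ≤ 2 * k) (hk : 0 < k) (u : V) {j : ℕ}
    (hj : j ≤ G.dist u r / k) :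
    (G.coarseTree r g k).dist (Quotient.mk _ u) (Quotient.mk _ (G.ancestor r u (j * k))) ≤
      G.dist u r / k - j + 2 := by
  set q := G.dist u r / k with hq_def
  have hq : q * k ≤ G.dist u r := Nat.div_mul_le_self _ _
  have hT := (hG.connected.isTree_coarseTree (r := r) (g := g) hk).connected
  have hstep : ∀ a i, (G.coarseTree r g k).dist a ((G.coarseTreeParent r g k)^[i] a) ≤ i :=
    fromRel_parent_dist_iterate_le hT
  have hchain := hstep (Quotient.mk _ (G.ancestor r u (q * k))) (q - j)
  rw [hG.iterate_coarseTreeParent_mk_ancestor hg hk hq (Nat.sub_le q j),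
    Nat.sub_sub_self hj] at hchain
  -- For `q ≠ 0`, `u` and the chain vertex at level `q * k` have the same parent.
  have hu := hstep (Quotient.mk _ u) 1
  rw [Function.iterate_one, hG.coarseTreeParent_mk hg, coarseParent, ← hq_def] at hu
  have htop : (G.coarseTree r g k).dist (Quotient.mk _ u)
      (Quotient.mk _ (G.ancestor r u (q * k))) ≤ 2 := by
    rcases Nat.eq_zero_or_pos q with hq0 | hq0
    · simp only [hq0, zero_tsub, zero_mul] at hu ⊢
      omega
    · have hpar := hstep (Quotient.mk _ (G.ancestor r u (q * k))) 1
      rw [Function.iterate_one, show q = q - 1 + 1 by omega,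
        hG.coarseTreeParent_mk_ancestor hg hk (by rwa [Nat.sub_add_cancel hq0]),
        dist_comm] at hpar
      have := hT.dist_triangle (u := Quotient.mk _ u)
        (v := Quotient.mk _ (G.ancestor r u ((q - 1) * k)))
        (w := Quotient.mk _ (G.ancestor r u ((q - 1 + 1) * k)))
      rw [Nat.sub_add_cancel hq0] at this hpar
      omega
  have := hT.dist_triangle (u := Quotient.mk _ u)
    (v := Quotient.mk _ (G.ancestor r u (q * k))) (w := Quotient.mk _ (G.ancestor r u (j * k)))
  omega

lemma IsTree.coarseTree_dist_mk_le (hG : G.IsTree)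
    (hg : ∀ u v, g u = g v → G.dist u v ≤ 2 * k) (hk : 0 < k) (u v : V) :
    (G.coarseTree r g k).dist (Quotient.mk _ u) (Quotient.mk _ v) ≤ G.dist u v + 5 := by
  -- The chains of `u` and `v` meet at level `j * k`, below the branch point of `u` and `v`.
  set j := (G.dist u r + G.dist v r - G.dist u v) / (2 * k)
  have hj : j * (2 * k) ≤ G.dist u r + G.dist v r - G.dist u v := Nat.div_mul_le_self _ _
  have hj2 : j * (2 * k) = 2 * (j * k) := by ring
  have := hG.connected.dist_triangle (u := u) (v := r) (w := v)
  have := hG.connected.dist_triangle (u := u) (v := v) (w := r)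
  have := hG.connected.dist_triangle (u := v) (v := u) (w := r)
  have := dist_comm (G := G) (u := r) (v := v)
  have := dist_comm (G := G) (u := u) (v := v)
  have hju : j ≤ G.dist u r / k := (Nat.le_div_iff_mul_le hk).mpr (by omega)
  have hjv : j ≤ G.dist v r / k := (Nat.le_div_iff_mul_le hk).mpr (by omega)
  have hmeet : G.ancestor r u (j * k) = G.ancestor r v (j * k) :=
    hG.ancestor_eq_ancestor (by omega)
  have hu := hG.coarseTree_dist_mk_ancestor_le hg hk u hju
  have hv := hG.coarseTree_dist_mk_ancestor_le hg hk v hjv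
  rw [hmeet] at hu
  rw [dist_comm] at hv
  have := (hG.connected.isTree_coarseTree (r := r) (g := g) hk).connected.dist_triangle
    (u := Quotient.mk _ u) (v := Quotient.mk _ (G.ancestor r v (j * k))) (w := Quotient.mk _ v)
  have := Nat.div_add_div_le_two_mul_div_add_add_one (G.dist u r) (G.dist v r) (G.dist u v) hk
  omega

lemma Connected.exists_mk_eq_of_adj_coarseTree (hG : G.Connected) (hk : 0 < k)
    {a b : G.CoarseVertex r g} (h : (G.coarseTree r g k).Adj a b) :
    ∃ u v, Quotient.mk _ u = a ∧ Quotient.mk _ v = b ∧ G.dist u v ≤ 2 * k := by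
  obtain ⟨-, hab | hba⟩ := (fromRel_adj _ _ _).mp h
  · exact ⟨a.out, _, Quotient.out_eq a, hab, (hG.dist_coarseParent_lt hk _).le⟩
  · exact ⟨_, b.out, hba, Quotient.out_eq b, by
      rw [dist_comm]; exact (hG.dist_coarseParent_lt hk _).le⟩

end CoarseTree

end SimpleGraph

lemma coarseTree_neighborSet_ncard_le {X : Type*} [PseudoMetricSpace X]
    {G : SimpleGraph V} {r : V} {g : V → X} {k : ℕ} (hG : G.Connected)
    (hk : 0 < k) {R : ℝ} (hR : ∀ u v, G.dist u v ≤ 2 * k → dist (g u) (g v) ≤ R) {C : ℕ}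
    (hC : ∀ x : X, (Metric.closedBall x R).Finite ∧ (Metric.closedBall x R).ncard ≤ C)
    (a : G.CoarseVertex r g) :
    ((G.coarseTree r g k).neighborSet a).Finite ∧
      ((G.coarseTree r g k).neighborSet a).ncard ≤ C * (4 * k + 1) := by
  obtain ⟨u, rfl⟩ := Quotient.exists_rep a
  -- A vertex is determined by its label and level, and neighbours have nearby labels and levels.
  set φ := Setoid.kerLift fun v => (g v, G.dist v r)
  set S := Metric.closedBall (g u) R ×ˢ Set.Icc (G.dist u r - 2 * k) (G.dist u r + 2 * k)
  have hmaps : ∀ b ∈ (G.coarseTree r g k).neighborSet ⟦u⟧, φ b ∈ S := by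
    intro b hb
    obtain ⟨u', v, hu', rfl, hd⟩ := hG.exists_mk_eq_of_adj_coarseTree hk hb
    obtain ⟨hgu, hlev⟩ : g u' = g u ∧ G.dist u' r = G.dist u r := by
      simpa [Setoid.ker_def] using Quotient.exact hu'
    have := hG.dist_triangle (u := u') (v := v) (w := r)
    have := hG.dist_triangle (u := v) (v := u') (w := r)
    have := SimpleGraph.dist_comm (G := G) (u := u') (v := v)
    refine ⟨?_, ?_⟩
    · rw [Metric.mem_closedBall, ← hgu]
      exact hR v u' (by omega)
    · simp only [φ, Setoid.kerLift_mk, Set.mem_Icc]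
      omega
  have hS : S.Finite := (hC _).1.prod (Set.finite_Icc _ _)
  have hφ := Setoid.kerLift_injective (fun v => (g v, G.dist v r))
  refine ⟨(hS.preimage hφ.injOn).subset hmaps,
    (Set.ncard_le_ncard_of_injOn φ hmaps hφ.injOn hS).trans ?_⟩
  rw [Set.ncard_prod, Set.ncard_Icc_nat]
  exact Nat.mul_le_mul (hC _).2 (by omega)

lemma dist_le_mul_length_of_forall_adj {W : Type*} {G : SimpleGraph W} [PseudoMetricSpace J]
    {F : W → J} {R : ℝ} (hR : ∀ a b, G.Adj a b → dist (F a) (F b) ≤ R) {a b : W}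
    (p : G.Walk a b) : dist (F a) (F b) ≤ R * p.length := by
  induction p with
  | nil => simp
  | @cons x y z h p ih =>
    rw [SimpleGraph.Walk.length_cons, Nat.cast_succ, mul_add_one]
    linarith [dist_triangle (F x) (F y) (F z), hR x y h]

namespace IsGraphQuasiIsometry

variable {T : SimpleGraph V} [MetricSpace J] {f : V → J}

lemma exists_dist_le_of_eq (hf : IsGraphQuasiIsometry T f) :
    ∃ K : ℕ, ∀ u v, f u = f v → T.dist u v ≤ K := by
  obtain ⟨μ, α, hμ, -, hfd, -⟩ := hf
  refine ⟨⌈μ * α⌉₊, fun u v huv => Nat.cast_le.mp ((?_ : _ ≤ μ * α).trans (Nat.le_ceil _))⟩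
  have := (hfd u v).1
  rw [huv, dist_self, one_div] at this
  have hμ0 : 0 < μ := by linarith
  calc (T.dist u v : ℝ) = μ * (μ⁻¹ * T.dist u v) := by field_simp
    _ ≤ μ * α := by gcongr; linarith

lemma exists_dist_le (hf : IsGraphQuasiIsometry T f) (D : ℕ) :
    ∃ R : ℝ, ∀ u v, T.dist u v ≤ D → dist (f u) (f v) ≤ R := by
  obtain ⟨μ, α, hμ, -, hfd, -⟩ := hf
  refine ⟨μ * D + α, fun u v huv => (hfd u v).2.trans ?_⟩
  gcongr

lemma of_surjective {W : Type*} {G : SimpleGraph W} (hf : IsGraphQuasiIsometry T f)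
    {π : V → W} (hπ : Function.Surjective π) {F : W → J} (hF : ∀ v, F (π v) = f v)
    (hG : G.Connected) {D c : ℕ}
    (hadj : ∀ a b, G.Adj a b → ∃ u v, π u = a ∧ π v = b ∧ T.dist u v ≤ D)
    (hdist : ∀ u v, G.dist (π u) (π v) ≤ T.dist u v + c) :
    IsGraphQuasiIsometry G F := by
  obtain ⟨R, hR⟩ := hf.exists_dist_le D
  have hFR : ∀ a b, G.Adj a b → dist (F a) (F b) ≤ R := by
    intro a b hab
    obtain ⟨u, v, rfl, rfl, huv⟩ := hadj a b hab
    rw [hF, hF]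
    exact hR u v huv
  obtain ⟨μ, α, hμ, hα, hfd, hcov⟩ := hf
  refine ⟨max R μ, α + c, le_max_of_le_right hμ, by positivity, fun a b => ?_, fun x => ?_⟩
  · obtain ⟨u, rfl⟩ := hπ a
    obtain ⟨v, rfl⟩ := hπ b
    obtain ⟨p, hp⟩ := hG.exists_walk_length_eq_dist (π u) (π v)
    have hFp := dist_le_mul_length_of_forall_adj hFR p
    rw [hp, hF, hF] at hFp
    rw [hF, hF]
    have hdG : (G.dist (π u) (π v) : ℝ) ≤ T.dist u v + c := by exact_mod_cast hdist u v
    have hinv : 1 / max R μ ≤ 1 / μ := one_div_le_one_div_of_le (by positivity) (le_max_right _ _)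
    have hinv1 : 1 / μ ≤ 1 := (div_le_one (by positivity)).mpr hμ
    have hc : (0 : ℝ) ≤ c := Nat.cast_nonneg c
    constructor
    · calc 1 / max R μ * G.dist (π u) (π v) - (α + c)
          ≤ 1 / μ * (T.dist u v + c) - (α + c) := by gcongr
        _ ≤ 1 / μ * T.dist u v - α := by nlinarith
        _ ≤ dist (f u) (f v) := (hfd u v).1
    · calc dist (f u) (f v) ≤ R * G.dist (π u) (π v) := hFp
        _ ≤ max R μ * G.dist (π u) (π v) := by gcongr; exact le_max_left _ _
        _ ≤ max R μ * G.dist (π u) (π v) + (α + c) := by linarith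
  · obtain ⟨v, hv⟩ := hcov x
    refine ⟨π v, ?_⟩
    rw [hF]
    linarith [(Nat.cast_nonneg c : (0 : ℝ) ≤ c)]

end IsGraphQuasiIsometry

/-- **Implication (1b) ⇒ (1) of Theorem `cqia`.** If a metric space `J` with uniformly finite
balls is quasi-isometric to a tree, then it is quasi-isometric to a tree of bounded
valency. -/
theorem quasiIsometric_to_bounded_valency_tree
    (T : SimpleGraph V) (htree : T.IsTree) [MetricSpace J]
    (hballs : ∀ r : ℝ, ∃ C : ℕ, ∀ x : J,
      (Metric.closedBall x r).Finite ∧ (Metric.closedBall x r).ncard ≤ C)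
    (f : V → J) (hf : IsGraphQuasiIsometry T f) :
    ∃ (V'' : Type u) (T'' : SimpleGraph V''), T''.IsTree ∧
      (∃ D : ℕ, ∀ v : V'', (T''.neighborSet v).Finite ∧ (T''.neighborSet v).ncard ≤ D) ∧
      ∃ f'' : V'' → J, IsGraphQuasiIsometry T'' f'' := by
  obtain ⟨r⟩ := htree.connected.nonempty
  obtain ⟨K, hK⟩ := hf.exists_dist_le_of_eq
  obtain ⟨k, hk, hfib⟩ : ∃ k, 0 < k ∧ ∀ u v, f u = f v → T.dist u v ≤ 2 * k :=
    ⟨K + 1, K.succ_pos, fun u v h => (hK u v h).trans (by omega)⟩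
  obtain ⟨R, hR⟩ := hf.exists_dist_le (2 * k)
  obtain ⟨C, hC⟩ := hballs R
  have hT'' := htree.connected.isTree_coarseTree (r := r) (g := f) hk
  refine ⟨_, _, hT'', ⟨_, coarseTree_neighborSet_ncard_le htree.connected hk hR hC⟩,
    _, hf.of_surjective (D := 2 * k) Quotient.mk_surjective (F := fun a => (Setoid.kerLift _ a).1)
      (fun _ => rfl) hT''.connected (fun _ _ => htree.connected.exists_mk_eq_of_adj_coarseTree hk)
      (htree.coarseTree_dist_mk_le hfib hk)⟩
end
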